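/- arXiv:2301.09846 — 8 statements merged into one kernel-verified Lean document; each statement's English description precedes it below -/
import Mathlib

section
/- For all integers n ≥ 0, the number of 5-colored overpartitions satisfies p̄_{-5}(8n+1) ≡ 0 (mod 2) and p̄_{-5}(8n+4) ≡ 0 (mod 2). -/
/-- The number of `t`-colored overpartitions of `n`, i.e. the `n`-th coefficient of the
formal power series `∏_{k≥1} (1-q^{2k})^t / (1-q^k)^{2t}` over `ℤ`.  Since every factor
with index `k > n` is `≡ 1 (mod q^{n+1})`, the `n`-th coefficient of the infinite product
equals the `n`-th coefficient of the product over `1 ≤ k ≤ n`, which is used here. -/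
noncomputable def pbar (t n : ℕ) : ℤ :=
  PowerSeries.coeff (R := ℤ) n
    ((∏ k ∈ Finset.Icc 1 n, (1 - PowerSeries.X ^ (2 * k)) ^ t) *
      PowerSeries.invOfUnit (∏ k ∈ Finset.Icc 1 n, (1 - PowerSeries.X ^ k) ^ (2 * t)) 1)

open PowerSeries in
lemma two_eq_zero_ps : (2 : PowerSeries (ZMod 2)) = 0 := by
  rw [← map_ofNat (PowerSeries.C (R := ZMod 2)) 2, show (2 : ZMod 2) = 0 from rfl, map_zero]

open PowerSeries in
lemma sq_one_sub (Y : PowerSeries (ZMod 2)) : (1 - Y) ^ 2 = 1 - Y ^ 2 := by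
  have h := two_eq_zero_ps
  linear_combination (Y ^ 2 - Y) * h

open PowerSeries in
lemma pbar5_even (m : ℕ) (hm : m ≠ 0) : ((pbar 5 m : ℤ) : ZMod 2) = 0 := by
  set φ : ℤ →+* ZMod 2 := Int.castRingHom (ZMod 2)
  set A : PowerSeries ℤ := ∏ k ∈ Finset.Icc 1 m, (1 - PowerSeries.X ^ (2 * k)) ^ 5
  set B : PowerSeries ℤ := ∏ k ∈ Finset.Icc 1 m, (1 - PowerSeries.X ^ k) ^ (2 * 5)
  have hB : constantCoeff (R := ℤ) B = ((1 : ℤˣ) : ℤ) := by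
    rw [map_prod]
    refine Finset.prod_eq_one fun k hk => ?_
    have hk0 : k ≠ 0 := by
      have := (Finset.mem_Icc.mp hk).1; omega
    simp [map_pow, map_sub, zero_pow hk0]
  have hmul : B * invOfUnit B 1 = 1 := mul_invOfUnit B 1 hB
  have hmap : map φ B * map φ (invOfUnit B 1) = 1 := by
    rw [← map_mul, hmul, map_one]
  have hAB : map φ A = map φ B := by
    rw [map_prod, map_prod]
    refine Finset.prod_congr rfl fun k hk => ?_
    simp only [map_pow, map_sub, map_one, PowerSeries.map_X]
    rw [show ((1 - PowerSeries.X ^ k : PowerSeries (ZMod 2)) ^ (2 * 5) =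
        ((1 - PowerSeries.X ^ k) ^ 2) ^ 5) from pow_mul _ 2 5,
      sq_one_sub, ← pow_mul, Nat.mul_comm k 2]
  have hF : map φ (A * invOfUnit B 1) = 1 := by
    rw [map_mul, hAB, hmap]
  have : ((pbar 5 m : ℤ) : ZMod 2) = PowerSeries.coeff (R := ZMod 2) m (map φ (A * invOfUnit B 1)) := by
    rw [PowerSeries.coeff_map]
    rfl
  rw [this, hF, PowerSeries.coeff_one, if_neg hm]

theorem pbar5_8n1_8n4_mod2 (n : ℕ) :
    pbar 5 (8 * n + 1) ≡ 0 [ZMOD 2] ∧ pbar 5 (8 * n + 4) ≡ 0 [ZMOD 2] := by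
  constructor <;>
  · refine Int.modEq_zero_iff_dvd.mpr ?_
    have h := pbar5_even _ (by omega : (8 * n + 1) ≠ 0)
    have h' := pbar5_even _ (by omega : (8 * n + 4) ≠ 0)
    first
    | exact_mod_cast (ZMod.intCast_zmod_eq_zero_iff_dvd _ 2).mp h
    | exact_mod_cast (ZMod.intCast_zmod_eq_zero_iff_dvd _ 2).mp h'
end

section
/- For all integers n ≥ 0, the number of 5-colored overpartitions satisfies p̄_{-5}(8n+2) ≡ 0 (mod 4). -/
open PowerSeries Finset

namespace Pbar54

abbrev R := ZMod 4

lemma four_eq_zero : (4 : R⟦X⟧) = 0 := by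
  rw [← map_ofNat (PowerSeries.C (R := R)) 4, show (4 : R) = 0 by decide, map_zero]

/-- `H k = ∑_{j ≥ 1} X^{jk}`. -/
noncomputable def H (k : ℕ) : R⟦X⟧ :=
  PowerSeries.mk fun m => if k ∣ m ∧ 0 < m then 1 else 0

lemma one_sub_mul_H (k : ℕ) (hk : 0 < k) : (1 - (X : R⟦X⟧) ^ k) * H k = X ^ k := by
  ext n
  rw [sub_mul, one_mul, map_sub, coeff_X_pow_mul' (H k) k n, coeff_X_pow]
  simp only [H, coeff_mk]
  rcases lt_or_ge n k with h | h
  · rw [if_neg (by omega : ¬ k ≤ n), if_neg (by omega : ¬ n = k), sub_zero, if_neg]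
    rintro ⟨hd, hpos⟩
    exact absurd (Nat.le_of_dvd hpos hd) (by omega)
  · rw [if_pos h]
    rcases eq_or_lt_of_le h with rfl | hlt
    · rw [if_pos rfl, if_pos ⟨dvd_rfl, hk⟩, Nat.sub_self, if_neg (by omega), sub_zero]
    · rw [if_neg (by omega : ¬ n = k)]
      have hdvd : k ∣ n ↔ k ∣ n - k := by
        constructor
        · intro hd; exact (Nat.dvd_sub hd dvd_rfl)
        · intro hd; have := Nat.dvd_add hd (dvd_refl k); rwa [Nat.sub_add_cancel h] at this
      by_cases hd : k ∣ n
      · rw [if_pos ⟨hd, by omega⟩, if_pos ⟨hdvd.1 hd, by omega⟩, sub_self]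
      · rw [if_neg (fun h' => hd h'.1), if_neg (fun h' => hd (hdvd.2 h'.1)), sub_self]

lemma factor_eq (k : ℕ) (hk : 0 < k) :
    (1 - (X : R⟦X⟧) ^ (2 * k)) = (1 + 2 * H k) * (1 - X ^ k) ^ 2 := by
  have h1 := one_sub_mul_H k hk
  have h2 : (1 + 2 * H k) * (1 - X ^ k) ^ 2
      = (1 - X ^ k) * ((1 - X ^ k) + 2 * ((1 - X ^ k) * H k)) := by ring
  rw [h2, h1]
  have h3 : (1 - (X : R⟦X⟧) ^ k) * ((1 - X ^ k) + 2 * X ^ k) = 1 - (X ^ k) ^ 2 := by ring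
  rw [h3, ← pow_mul, mul_comm k 2]

lemma sq_one_add_two (a : R⟦X⟧) : (1 + 2 * a) ^ 2 = 1 := by
  have h : (1 + 2 * a) ^ 2 = 1 + 4 * (a + a * a) := by ring
  rw [h, four_eq_zero]; ring

lemma pow5 (a : R⟦X⟧) : (1 + 2 * a) ^ 5 = 1 + 2 * a := by
  have h : (1 + 2 * a) ^ 5 = ((1 + 2 * a) ^ 2) ^ 2 * (1 + 2 * a) := by ring
  rw [h, sq_one_add_two]; ring

lemma prod_one_add_two (s : Finset ℕ) (f : ℕ → R⟦X⟧) :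
    ∏ k ∈ s, (1 + 2 * f k) = 1 + 2 * ∑ k ∈ s, f k := by
  induction s using Finset.cons_induction with
  | empty => simp
  | cons a s ha ih =>
    rw [Finset.prod_cons, ih, Finset.sum_cons]
    have h : (1 + 2 * f a) * (1 + 2 * ∑ k ∈ s, f k)
        = 1 + 2 * (f a + ∑ k ∈ s, f k) + 4 * (f a * ∑ k ∈ s, f k) := by ring
    rw [h, four_eq_zero]; ring

/-- The key identity over `ZMod 4`. -/
lemma main_identity (N : ℕ) :
    (∏ k ∈ Finset.Icc 1 N, (1 - (X : R⟦X⟧) ^ (2 * k)) ^ 5)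
      = (1 + 2 * ∑ k ∈ Finset.Icc 1 N, H k)
        * ∏ k ∈ Finset.Icc 1 N, (1 - (X : R⟦X⟧) ^ k) ^ (2 * 5) := by
  rw [← prod_one_add_two, ← Finset.prod_mul_distrib]
  apply Finset.prod_congr rfl
  intro k hk
  have hk1 : 0 < k := by have := (Finset.mem_Icc.mp hk).1; omega
  rw [factor_eq k hk1, mul_pow, pow5, ← pow_mul]

lemma two_add_two : (2 : R) + 2 = 0 := by decide

end Pbar54

open Pbar54 in
theorem pbar5_8n2_mod4 (n : ℕ) :
    pbar 5 (8 * n + 2) ≡ 0 [ZMOD 4] := by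
  set N := 8 * n + 2 with hN
  have hNpos : 0 < N := by omega
  rw [Int.modEq_zero_iff_dvd, show (4 : ℤ) = ((4 : ℕ) : ℤ) by norm_num,
    ← ZMod.intCast_zmod_eq_zero_iff_dvd]
  set φ : ℤ →+* R := Int.castRingHom R with hφ
  set Q : ℤ⟦X⟧ := ∏ k ∈ Finset.Icc 1 N, (1 - PowerSeries.X ^ k) ^ (2 * 5) with hQ
  have hQc : PowerSeries.constantCoeff Q = PowerSeries.constantCoeff ((1 : ℤ⟦X⟧ˣ) : ℤ⟦X⟧) := by
    rw [hQ, map_prod, Finset.prod_eq_one, Units.val_one, map_one]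
    intro k hk
    have hk1 : k ≠ 0 := by have := (Finset.mem_Icc.mp hk).1; omega
    rw [map_pow, map_sub, map_one, map_pow, PowerSeries.constantCoeff_X,
      zero_pow hk1, sub_zero, one_pow]
  have hQinv : Q * PowerSeries.invOfUnit Q 1 = 1 :=
    PowerSeries.mul_invOfUnit Q 1 hQc
  have hmapQ : PowerSeries.map φ Q
      = ∏ k ∈ Finset.Icc 1 N, (1 - (X : R⟦X⟧) ^ k) ^ (2 * 5) := by
    rw [hQ, map_prod]
    apply Finset.prod_congr rfl
    intro k _
    rw [map_pow, map_sub, map_one, map_pow, PowerSeries.map_X]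
  have hmapP : PowerSeries.map φ (∏ k ∈ Finset.Icc 1 N, (1 - PowerSeries.X ^ (2 * k)) ^ 5)
      = ∏ k ∈ Finset.Icc 1 N, (1 - (X : R⟦X⟧) ^ (2 * k)) ^ 5 := by
    rw [map_prod]
    apply Finset.prod_congr rfl
    intro k _
    rw [map_pow, map_sub, map_one, map_pow, PowerSeries.map_X]
  have key : ((pbar 5 N : ℤ) : R)
      = PowerSeries.coeff (R := R) N
        ((1 + 2 * ∑ k ∈ Finset.Icc 1 N, H k)
          * (PowerSeries.map φ Q
              * PowerSeries.map φ (PowerSeries.invOfUnit Q 1))) := by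
    have hcast : ((pbar 5 N : ℤ) : R) = φ (pbar 5 N) := rfl
    rw [hcast, pbar, ← PowerSeries.coeff_map, map_mul, ← mul_assoc, hmapP,
      main_identity N, ← hmapQ]
  rw [key, ← map_mul (PowerSeries.map φ), hQinv, map_one, mul_one]
  rw [two_mul, map_add, map_add, PowerSeries.coeff_one, if_neg (by omega : ¬ N = 0)]
  rw [map_sum]
  have hcoeffH : ∀ k ∈ Finset.Icc 1 N, PowerSeries.coeff (R := R) N (H k)
      = if k ∣ N then 1 else 0 := by
    intro k _
    simp only [H, PowerSeries.coeff_mk]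
    by_cases hd : k ∣ N
    · rw [if_pos ⟨hd, hNpos⟩, if_pos hd]
    · rw [if_neg (fun h => hd h.1), if_neg hd]
  rw [Finset.sum_congr rfl hcoeffH, Finset.sum_boole]
  have hfilter : Finset.filter (fun k => k ∣ N) (Finset.Icc 1 N) = N.divisors := by
    rw [Nat.divisors, ← Finset.Ico_add_one_right_eq_Icc]
  rw [hfilter]
  -- divisor count of `N = 2 * (4n+1)` is even
  have hsplit : N = 2 * (4 * n + 1) := by omega
  have hodd : Nat.Coprime 2 (4 * n + 1) := Nat.coprime_two_left.mpr ⟨2 * n, by omega⟩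
  have hcard : N.divisors.card = 2 * (4 * n + 1).divisors.card := by
    rw [hsplit, hodd.card_divisors_mul, show (Nat.divisors 2).card = 2 by decide]
  rw [hcard]
  push_cast
  set e : R := ((4 * n + 1).divisors.card : R)
  have : (0 : R) + (2 * e + 2 * e) = (2 + 2) * e := by ring
  rw [this, two_add_two, zero_mul]
end

section
/- For all integers n ≥ 0, the number of 5-colored overpartitions satisfies p̄_{-5}(8n+3) ≡ 0 (mod 8), p̄_{-5}(8n+5) ≡ 0 (mod 8), and p̄_{-5}(8n+6) ≡ 0 (mod 8). -/
set_option maxHeartbeats 1600000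

namespace OPAux
noncomputable section
open Finset PowerSeries

abbrev S : Type := PowerSeries (ZMod 8)

lemma eight_eq_zero : (8 : S) = 0 := by
  have h : ((PowerSeries.C (R := ZMod 8)) (8 : ZMod 8)) = (8 : S) := map_ofNat _ 8
  have h2 : (8 : ZMod 8) = 0 := by decide
  rw [h2, map_zero] at h
  exact h.symm

lemma unit_cancel {t : ℕ} {u f : S} (hu : IsUnit u) (h : X ^ t ∣ u * f) : X ^ t ∣ f := by
  obtain ⟨v, hv⟩ := hu
  obtain ⟨w, hw⟩ := h
  refine ⟨(↑v⁻¹ : S) * w, ?_⟩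
  have h2 : (↑v⁻¹ : S) * (u * f) = (↑v⁻¹ : S) * (X ^ t * w) := by rw [hw]
  have h3 : (↑v⁻¹ : S) * u = 1 := by rw [← hv]; exact Units.inv_mul v
  calc f = ((↑v⁻¹ : S) * u) * f := by rw [h3, one_mul]
    _ = X ^ t * ((↑v⁻¹ : S) * w) := by rw [mul_assoc, h2]; ring

lemma isUnit_cc {f : S} (h : constantCoeff (R := ZMod 8) f = 1) : IsUnit f := by
  rw [PowerSeries.isUnit_iff_constantCoeff, h]
  exact isUnit_one

lemma prod_sub_one {ι : Type} {s : Finset ι} {t : ℕ} (f : ι → S)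
    (h : ∀ i ∈ s, X ^ t ∣ (f i - 1)) : X ^ t ∣ (∏ i ∈ s, f i - 1) := by
  classical
  induction s using Finset.cons_induction with
  | empty => simp
  | cons a s ha ih =>
    rw [Finset.prod_cons]
    have h1 : X ^ t ∣ (f a - 1) := h a (Finset.mem_cons_self a s)
    have h2 : X ^ t ∣ (∏ i ∈ s, f i - 1) := ih (fun i hi => h i (Finset.mem_cons_of_mem hi))
    have h3 : f a * ∏ i ∈ s, f i - 1 = (f a - 1) * ∏ i ∈ s, f i + (∏ i ∈ s, f i - 1) := by ring
    rw [h3]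
    exact dvd_add (Dvd.dvd.mul_right h1 _) h2

lemma coeff_eq_zero_of_dvd {t m : ℕ} {f : S} (h : X ^ t ∣ f) (hm : m < t) :
    PowerSeries.coeff (R := ZMod 8) m f = 0 := by
  obtain ⟨w, hw⟩ := h
  rw [hw, PowerSeries.coeff_X_pow_mul', if_neg (by omega)]

/-- Gaussian binomial (base `X²`), Pascal recursion. -/
def qb : ℕ → ℕ → S
  | 0, 0 => 1
  | 0, _ + 1 => 0
  | _ + 1, 0 => 1
  | m + 1, k + 1 => X ^ (2 * (k + 1)) * qb m (k + 1) + qb m k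

@[simp] lemma qb_zero_right (m : ℕ) : qb m 0 = 1 := by cases m <;> rfl

lemma qb_eq_zero : ∀ {m k : ℕ}, m < k → qb m k = 0 := by
  intro m
  induction m with
  | zero => intro k h; cases k with
    | zero => omega
    | succ k => rfl
  | succ m ih =>
    intro k h
    cases k with
    | zero => omega
    | succ k =>
      show X ^ (2 * (k + 1)) * qb m (k + 1) + qb m k = 0
      rw [ih (by omega), ih (by omega), mul_zero, zero_add]

lemma qb_succ_succ (m k : ℕ) :
    qb (m + 1) (k + 1) = X ^ (2 * (k + 1)) * qb m (k + 1) + qb m k := rfl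

lemma qb_diag : ∀ k, qb k k = 1 := by
  intro k
  induction k with
  | zero => rfl
  | succ k ih => rw [qb_succ_succ, qb_eq_zero (by omega), mul_zero, zero_add, ih]

lemma oneSubXpow_congr {a b : ℕ} (h : a = b) : ((1:S) - X ^ a) = (1:S) - X ^ b := by rw [h]

lemma qb_congr {m m' k : ℕ} (h : m = m') : qb m k = qb m' k := by rw [h]

/-- Product formula for Gaussian binomials. -/
lemma qb_prod_formula : ∀ (k r : ℕ),
    (∏ i ∈ range r, ((1 : S) - X ^ (2 * (i + 1)))) * qb (k + r) k
      = ∏ i ∈ range r, ((1 : S) - X ^ (2 * (k + i + 1))) := by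
  intro k
  induction k with
  | zero => intro r; simp
  | succ k ihk =>
    intro r
    induction r with
    | zero => simp [qb_diag]
    | succ r ihr =>
      have hrec : qb (k + 1 + (r + 1)) (k + 1)
          = X ^ (2 * (k + 1)) * qb (k + 1 + r) (k + 1) + qb (k + (r + 1)) k := by
        rw [show k + (r + 1) = k + 1 + r from by omega,
          show k + 1 + (r + 1) = (k + 1 + r) + 1 from by omega]
        exact qb_succ_succ _ _
      have ihr' : (∏ i ∈ range r, ((1 : S) - X ^ (2 * (i + 1)))) * qb (k + 1 + r) (k + 1)
          = ∏ i ∈ range r, ((1 : S) - X ^ (2 * (k + i + 2))) := by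
        rw [ihr]
        exact Finset.prod_congr rfl (fun i _ => oneSubXpow_congr (by omega))
      have ihk'' : ((∏ i ∈ range r, ((1 : S) - X ^ (2 * (i + 1)))) * (1 - X ^ (2 * (r + 1))))
            * qb (k + (r + 1)) k
          = (1 - X ^ (2 * (k + 1))) * ∏ i ∈ range r, ((1 : S) - X ^ (2 * (k + i + 2))) := by
        have e : ∏ i ∈ range (r + 1), ((1 : S) - X ^ (2 * (i + 1)))
            = (∏ i ∈ range r, ((1 : S) - X ^ (2 * (i + 1)))) * (1 - X ^ (2 * (r + 1))) :=
          Finset.prod_range_succ _ _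
        have e2 : ∏ i ∈ range (r + 1), ((1 : S) - X ^ (2 * (k + i + 1)))
            = (1 - X ^ (2 * (k + 1)))
              * ∏ i ∈ range r, ((1 : S) - X ^ (2 * (k + i + 2))) := by
          rw [Finset.prod_range_succ']
          simp only [show ∀ i : ℕ, 2 * (k + (i + 1) + 1) = 2 * (k + i + 2) from fun i => by omega,
            Nat.add_zero]
          exact mul_comm _ _
        rw [← e, ← e2, ihk (r + 1)]
      have etarget : ∏ i ∈ range (r + 1), ((1 : S) - X ^ (2 * (k + 1 + i + 1)))
          = (∏ i ∈ range r, ((1 : S) - X ^ (2 * (k + i + 2)))) * (1 - X ^ (2 * (k + r + 2))) := by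
        rw [Finset.prod_range_succ]
        congr 1
        · exact Finset.prod_congr rfl (fun i _ => oneSubXpow_congr (by omega))
        · exact oneSubXpow_congr (by omega)
      have eL : ∏ i ∈ range (r + 1), ((1 : S) - X ^ (2 * (i + 1)))
          = (∏ i ∈ range r, ((1 : S) - X ^ (2 * (i + 1)))) * (1 - X ^ (2 * (r + 1))) :=
        Finset.prod_range_succ _ _
      rw [hrec, eL, etarget]
      have hXX : (X : S) ^ (2 * (k + 1)) * X ^ (2 * (r + 1)) = X ^ (2 * (k + r + 2)) := by
        rw [← pow_add]; congr 1; ring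
      calc (∏ i ∈ range r, ((1 : S) - X ^ (2 * (i + 1)))) * (1 - X ^ (2 * (r + 1)))
            * (X ^ (2 * (k + 1)) * qb (k + 1 + r) (k + 1) + qb (k + (r + 1)) k)
          = X ^ (2 * (k + 1)) * (1 - X ^ (2 * (r + 1)))
              * ((∏ i ∈ range r, ((1 : S) - X ^ (2 * (i + 1)))) * qb (k + 1 + r) (k + 1))
            + ((∏ i ∈ range r, ((1 : S) - X ^ (2 * (i + 1)))) * (1 - X ^ (2 * (r + 1))))
              * qb (k + (r + 1)) k := by ring
        _ = X ^ (2 * (k + 1)) * (1 - X ^ (2 * (r + 1)))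
              * ∏ i ∈ range r, ((1 : S) - X ^ (2 * (k + i + 2)))
            + (1 - X ^ (2 * (k + 1))) * ∏ i ∈ range r, ((1 : S) - X ^ (2 * (k + i + 2))) := by
            rw [ihr', ihk'']
        _ = (∏ i ∈ range r, ((1 : S) - X ^ (2 * (k + i + 2)))) * (1 - X ^ (2 * (k + r + 2))) := by
            rw [← hXX]; ring

lemma choose2_add : ∀ t : ℕ, 2 * Nat.choose t 2 + t = t * t := by
  intro t
  induction t with
  | zero => rfl
  | succ t ih =>
    rw [Nat.choose_succ_succ, Nat.choose_one_right]
    have h : (t + 1) * (t + 1) = t * t + 2 * t + 1 := by ring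
    rw [h]
    linarith [ih]

lemma choose2_succ (t : ℕ) : Nat.choose (t + 1) 2 = Nat.choose t 2 + t := by
  rw [Nat.choose_succ_succ, Nat.choose_one_right, Nat.add_comm]

/-- distance |n - k| -/
def dd (n k : ℕ) : ℕ := if k ≤ n then n - k else k - n

lemma expident {n k : ℕ} (hn : 1 ≤ n) (hk : k ≤ 2 * n) :
    2 * Nat.choose (2 * n - k) 2 + (2 * n - 1) * k = (dd n k) ^ 2 + (3 * n ^ 2 - 2 * n) := by
  have h3 : 2 * n ≤ 3 * n ^ 2 := by nlinarith
  have h1 := choose2_add (2 * n - k)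
  set t := 2 * n - k with hT
  have ht : t + k = 2 * n := by omega
  set a := 2 * n - 1 with hA
  have ha : a + 1 = 2 * n := by omega
  set u := 3 * n ^ 2 - 2 * n with hU
  have hu : u + 2 * n = 3 * n ^ 2 := Nat.sub_add_cancel h3
  have hu' : u + 2 * n = 3 * (n * n) := by rw [hu]; ring
  have p4 : a * k + k = 2 * (n * k) := by
    have : (a + 1) * k = 2 * n * k := by rw [ha]
    calc a * k + k = (a + 1) * k := by ring
      _ = 2 * (n * k) := by rw [this]; ring
  rcases le_or_gt k n with h | h
  · -- d = n - k
    rw [dd, if_pos h]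
    set d := n - k with hD
    have hd : d + k = n := by omega
    have ht2 : t = n + d := by omega
    have p1 : t * t = n * n + 2 * (n * d) + d * d := by rw [ht2]; ring
    have p2 : n * k + n * d = n * n := by
      have : n * (k + d) = n * n := by rw [show k + d = n from by omega]
      calc n * k + n * d = n * (k + d) := by ring
        _ = n * n := this
    have hsq : d ^ 2 = d * d := by ring
    rw [hsq]
    linarith [h1, p1, p2, p4, hu', hd, ht2]
  · -- d = k - n
    rw [dd, if_neg (by omega)]
    set d := k - n with hD
    have hd : k = n + d := by omega
    have ht2 : t + d = n := by omega
    have q1 : n * n = t * t + 2 * (t * d) + d * d := by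
      rw [show n = t + d from by omega]; ring
    have q3 : n * d = t * d + d * d := by
      rw [show n = t + d from by omega]; ring
    have p2 : n * k = n * n + n * d := by rw [hd]; ring
    have hsq : d ^ 2 = d * d := by ring
    rw [hsq]
    linarith [h1, q1, q3, p2, p4, hu', hd, ht2]

/-- Finite Cauchy binomial identity, in `Polynomial S`. -/
lemma C2 (m : ℕ) :
    ∏ k ∈ range m, (Polynomial.C ((X : S) ^ (2 * k)) + Polynomial.X)
      = ∑ k ∈ range (m + 1),
          Polynomial.C (qb m k * (X : S) ^ (2 * Nat.choose (m - k) 2)) * Polynomial.X ^ k := by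
  induction m with
  | zero => simp
  | succ m ih =>
    have key : ∀ k ∈ range (m + 1),
        Polynomial.C (qb (m + 1) (k + 1) * (X : S) ^ (2 * Nat.choose (m + 1 - (k + 1)) 2))
            * Polynomial.X ^ (k + 1)
          = Polynomial.C ((X : S) ^ (2 * (k + 1)) * qb m (k + 1)
                * (X : S) ^ (2 * Nat.choose (m - k) 2)) * Polynomial.X ^ (k + 1)
            + Polynomial.C (qb m k * (X : S) ^ (2 * Nat.choose (m - k) 2))
                * Polynomial.X ^ (k + 1) := by
      intro k hk
      rw [show m + 1 - (k + 1) = m - k from by omega, qb_succ_succ, add_mul,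
        Polynomial.C_add, add_mul]
    have hSB : ∑ k ∈ range (m + 1),
          Polynomial.C (qb m k * (X : S) ^ (2 * Nat.choose (m - k) 2)) * Polynomial.X ^ (k + 1)
        = (∑ k ∈ range (m + 1),
            Polynomial.C (qb m k * (X : S) ^ (2 * Nat.choose (m - k) 2)) * Polynomial.X ^ k)
            * Polynomial.X := by
      rw [Finset.sum_mul]
      exact Finset.sum_congr rfl (fun k _ => by rw [pow_succ, mul_assoc])
    have hSA : ∑ k ∈ range (m + 1),
          Polynomial.C ((X : S) ^ (2 * (k + 1)) * qb m (k + 1)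
            * (X : S) ^ (2 * Nat.choose (m - k) 2)) * Polynomial.X ^ (k + 1)
          + Polynomial.C (qb (m + 1) 0 * (X : S) ^ (2 * Nat.choose (m + 1 - 0) 2))
              * Polynomial.X ^ 0
        = (∑ k ∈ range (m + 1),
            Polynomial.C (qb m k * (X : S) ^ (2 * Nat.choose (m - k) 2)) * Polynomial.X ^ k)
            * Polynomial.C ((X : S) ^ (2 * m)) := by
      have hRHS : (∑ k ∈ range (m + 1),
            Polynomial.C (qb m k * (X : S) ^ (2 * Nat.choose (m - k) 2)) * Polynomial.X ^ k)
            * Polynomial.C ((X : S) ^ (2 * m))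
          = ∑ k ∈ range (m + 1),
            Polynomial.C (qb m k * (X : S) ^ (2 * Nat.choose (m - k) 2 + 2 * m))
              * Polynomial.X ^ k := by
        rw [Finset.sum_mul]
        apply Finset.sum_congr rfl
        intro k _
        rw [mul_comm _ (Polynomial.C ((X : S) ^ (2 * m))), ← mul_assoc, ← Polynomial.C_mul,
          pow_add]
        ring_nf
      rw [hRHS, Finset.sum_range_succ' (fun k => Polynomial.C (qb m k
          * (X : S) ^ (2 * Nat.choose (m - k) 2 + 2 * m)) * Polynomial.X ^ k) m]
      rw [Finset.sum_range_succ (fun k => Polynomial.C ((X : S) ^ (2 * (k + 1)) * qb m (k + 1)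
          * (X : S) ^ (2 * Nat.choose (m - k) 2)) * Polynomial.X ^ (k + 1)) m]
      have hzero : Polynomial.C ((X : S) ^ (2 * (m + 1)) * qb m (m + 1)
          * (X : S) ^ (2 * Nat.choose (m - m) 2)) * Polynomial.X ^ (m + 1) = 0 := by
        rw [qb_eq_zero (show m < m + 1 from by omega)]
        simp
      rw [hzero, add_zero]
      refine congrArg₂ (· + ·) ?_ ?_
      · apply Finset.sum_congr rfl
        intro k hk
        have hk' : k < m := Finset.mem_range.mp hk
        congr 1
        congr 1
        have hch : Nat.choose (m - k) 2 = Nat.choose (m - (k + 1)) 2 + (m - (k + 1)) := by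
          rw [show m - k = (m - (k + 1)) + 1 from by omega, choose2_succ]
        rw [hch]
        rw [mul_comm ((X : S) ^ (2 * (k + 1))) (qb m (k + 1)), mul_assoc, ← pow_add]
        have h9 : k + 1 ≤ m := hk'
        set c := Nat.choose (m - (k + 1)) 2 with hc
        rw [show 2 * (k + 1) + 2 * (c + (m - (k + 1))) = 2 * c + 2 * m from by omega]
      · rw [qb_zero_right, qb_zero_right, one_mul, one_mul]
        congr 2
        simp only [Nat.sub_zero]
        rw [choose2_succ]
        set c := Nat.choose m 2 with hc
        rw [show 2 * (c + m) = 2 * c + 2 * m from by omega]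
    rw [Finset.prod_range_succ, ih, Finset.sum_range_succ' _ (m + 1),
      Finset.sum_congr rfl key, Finset.sum_add_distrib, mul_add, hSB, ← hSA]
    ring

lemma X_pow_cancel {t : ℕ} {f g : S} (h : f * X ^ t = g * X ^ t) : f = g := by
  ext d
  have := congrArg (PowerSeries.coeff (R := ZMod 8) (d + t)) h
  rwa [PowerSeries.coeff_mul_X_pow, PowerSeries.coeff_mul_X_pow] at this

lemma expsum {n : ℕ} (hn : 1 ≤ n) : n * (n - 1) + n * (2 * n - 1) = 3 * n ^ 2 - 2 * n := by
  have h3 : 2 * n ≤ 3 * n ^ 2 := by nlinarith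
  zify [h3, hn, show 1 ≤ 2 * n from by omega]
  ring

/-- Finite Jacobi triple product, specialised. -/
lemma G2 (n : ℕ) (hn : 1 ≤ n) :
    (∏ t ∈ range n, ((1 : S) - X ^ (2 * t + 1))) ^ 2
      = ∑ k ∈ range (2 * n + 1), (-1 : S) ^ (n + k) * qb (2 * n) k * X ^ (dd n k ^ 2) := by
  have h := congrArg (Polynomial.eval (-(X : S) ^ (2 * n - 1))) (C2 (2 * n))
  rw [Polynomial.eval_prod, Polynomial.eval_finset_sum] at h
  have hL : ∀ k ∈ range (2 * n),
      Polynomial.eval (-(X : S) ^ (2 * n - 1)) (Polynomial.C ((X : S) ^ (2 * k)) + Polynomial.X)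
        = (X : S) ^ (2 * k) - X ^ (2 * n - 1) := by
    intro k _
    rw [Polynomial.eval_add, Polynomial.eval_C, Polynomial.eval_X, ← sub_eq_add_neg]
  have hR : ∀ k ∈ range (2 * n + 1),
      Polynomial.eval (-(X : S) ^ (2 * n - 1))
          (Polynomial.C (qb (2 * n) k * (X : S) ^ (2 * Nat.choose (2 * n - k) 2))
            * Polynomial.X ^ k)
        = (-1 : S) ^ k * qb (2 * n) k
            * X ^ (2 * Nat.choose (2 * n - k) 2 + (2 * n - 1) * k) := by
    intro k _
    rw [Polynomial.eval_mul, Polynomial.eval_pow, Polynomial.eval_C, Polynomial.eval_X]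
    rw [neg_pow, ← pow_mul, pow_add]
    ring
  rw [Finset.prod_congr rfl hL, Finset.sum_congr rfl hR] at h
  -- split the product
  have hsplit : ∏ k ∈ range (2 * n), ((X : S) ^ (2 * k) - X ^ (2 * n - 1))
      = (∏ k ∈ range n, ((X : S) ^ (2 * k) - X ^ (2 * n - 1)))
        * ∏ k ∈ Finset.Ico n (2 * n), ((X : S) ^ (2 * k) - X ^ (2 * n - 1)) := by
    rw [range_eq_Ico, ← Finset.prod_Ico_consecutive _ (Nat.zero_le n) (by omega),
      ← range_eq_Ico]
  have hlo : ∏ k ∈ range n, ((X : S) ^ (2 * k) - X ^ (2 * n - 1))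
      = X ^ (n * (n - 1)) * ∏ t ∈ range n, ((1 : S) - X ^ (2 * t + 1)) := by
    rw [← Finset.prod_range_reflect]
    have hfac : ∀ j ∈ range n,
        (X : S) ^ (2 * (n - 1 - j)) - X ^ (2 * n - 1)
          = X ^ (2 * (n - 1 - j)) * (1 - X ^ (2 * j + 1)) := by
      intro j hj
      have hj' : j < n := Finset.mem_range.mp hj
      rw [mul_sub, mul_one, ← pow_add, show 2 * (n - 1 - j) + (2 * j + 1) = 2 * n - 1 from
        by omega]
    rw [Finset.prod_congr rfl hfac, Finset.prod_mul_distrib,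
      Finset.prod_pow_eq_pow_sum]
    congr 2
    rw [Finset.sum_range_reflect (fun j => 2 * j) n]
    rw [← Finset.sum_range_id_mul_two n, ← Finset.mul_sum]
    ring
  have hhi : ∏ k ∈ Finset.Ico n (2 * n), ((X : S) ^ (2 * k) - X ^ (2 * n - 1))
      = (-1 : S) ^ n * (X ^ (n * (2 * n - 1))
          * ∏ t ∈ range n, ((1 : S) - X ^ (2 * t + 1))) := by
    rw [Finset.prod_Ico_eq_prod_range, show 2 * n - n = n from by omega]
    have hfac : ∀ t ∈ range n,
        (X : S) ^ (2 * (n + t)) - X ^ (2 * n - 1)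
          = (-1) * (X ^ (2 * n - 1) * (1 - X ^ (2 * t + 1))) := by
      intro t _
      rw [neg_one_mul, mul_sub, mul_one, neg_sub, ← pow_add,
        show 2 * n - 1 + (2 * t + 1) = 2 * (n + t) from by omega]
    rw [Finset.prod_congr rfl hfac, Finset.prod_mul_distrib, Finset.prod_mul_distrib,
      Finset.prod_const, Finset.prod_const, Finset.card_range, ← pow_mul,
      Nat.mul_comm (2 * n - 1) n]
  rw [hsplit, hlo, hhi] at h
  -- rewrite RHS exponents
  have hRE : ∀ k ∈ range (2 * n + 1),
      (-1 : S) ^ k * qb (2 * n) k * X ^ (2 * Nat.choose (2 * n - k) 2 + (2 * n - 1) * k)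
        = ((-1 : S) ^ k * qb (2 * n) k * X ^ (dd n k ^ 2)) * X ^ (3 * n ^ 2 - 2 * n) := by
    intro k hk
    rw [expident hn (by have := Finset.mem_range.mp hk; omega), pow_add]
    ring
  rw [Finset.sum_congr rfl hRE, ← Finset.sum_mul] at h
  have hLE : X ^ (n * (n - 1)) * (∏ t ∈ range n, ((1 : S) - X ^ (2 * t + 1)))
        * ((-1 : S) ^ n * (X ^ (n * (2 * n - 1))
            * ∏ t ∈ range n, ((1 : S) - X ^ (2 * t + 1))))
      = ((-1 : S) ^ n * (∏ t ∈ range n, ((1 : S) - X ^ (2 * t + 1))) ^ 2)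
          * X ^ (3 * n ^ 2 - 2 * n) := by
    rw [← expsum hn, pow_add]
    ring
  rw [hLE] at h
  have h2 := X_pow_cancel h
  have hneg : (-1 : S) ^ n * (-1 : S) ^ n = 1 := by
    rw [← mul_pow]
    norm_num
  calc (∏ t ∈ range n, ((1 : S) - X ^ (2 * t + 1))) ^ 2
      = ((-1 : S) ^ n * (-1 : S) ^ n) * (∏ t ∈ range n, ((1 : S) - X ^ (2 * t + 1))) ^ 2 := by
        rw [hneg, one_mul]
    _ = (-1 : S) ^ n * ((-1 : S) ^ n * (∏ t ∈ range n, ((1 : S) - X ^ (2 * t + 1))) ^ 2) := by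
        ring
    _ = (-1 : S) ^ n * ∑ k ∈ range (2 * n + 1),
          (-1 : S) ^ k * qb (2 * n) k * X ^ (dd n k ^ 2) := by rw [h2]
    _ = ∑ k ∈ range (2 * n + 1), (-1 : S) ^ (n + k) * qb (2 * n) k * X ^ (dd n k ^ 2) := by
        rw [Finset.mul_sum]
        apply Finset.sum_congr rfl
        intro k _
        rw [pow_add]
        ring

def cP (n : ℕ) : S := ∏ t ∈ range n, ((1 : S) - X ^ (2 * t + 1))
def dP (n : ℕ) : S := ∏ i ∈ range n, ((1 : S) - X ^ (2 * (i + 1)))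
def gS (n : ℕ) : S := 1 + ∑ j ∈ range n, 2 * (-1 : S) ^ (j + 1) * X ^ ((j + 1) ^ 2)

lemma isUnit_prod_sub {s : Finset ℕ} {f : ℕ → ℕ} (hf : ∀ i ∈ s, 1 ≤ f i) :
    IsUnit (∏ i ∈ s, ((1 : S) - X ^ (f i))) := by
  apply isUnit_cc
  rw [map_prod]
  apply Finset.prod_eq_one
  intro i hi
  rw [map_sub, map_one, map_pow, PowerSeries.constantCoeff_X,
    zero_pow (by have := hf i hi; omega), sub_zero]

lemma dvd_prod_sub_one {s : Finset ℕ} {f : ℕ → ℕ} {t : ℕ} (hf : ∀ i ∈ s, t ≤ f i) :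
    X ^ t ∣ (∏ i ∈ s, ((1 : S) - X ^ (f i)) - 1) := by
  apply prod_sub_one
  intro i hi
  have : (1 : S) - X ^ (f i) - 1 = -(X ^ (f i)) := by ring
  rw [this]
  exact (pow_dvd_pow X (hf i hi)).neg_right

lemma dqb {n k : ℕ} (hn : 1 ≤ n) (hk : k ≤ 2 * n) :
    X ^ (2 * n + 1) ∣ (dP n * qb (2 * n) k - 1) * X ^ (dd n k ^ 2) := by
  have hmain := qb_prod_formula k (2 * n - k)
  rw [show k + (2 * n - k) = 2 * n from by omega] at hmain
  have hPs : X ^ (2 * k + 2) ∣ (∏ i ∈ range (2 * n - k), ((1 : S) - X ^ (2 * (k + i + 1))) - 1) :=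
    dvd_prod_sub_one (fun i _ => by omega)
  rcases le_or_gt k n with h | h
  · -- r = 2n - k ≥ n : ∏_{range r} = dP n * E'
    have hsplit : ∏ i ∈ range (2 * n - k), ((1 : S) - X ^ (2 * (i + 1)))
        = dP n * ∏ i ∈ Finset.Ico n (2 * n - k), ((1 : S) - X ^ (2 * (i + 1))) := by
      rw [dP, range_eq_Ico, ← Finset.prod_Ico_consecutive _ (Nat.zero_le n) (by omega),
        ← range_eq_Ico]
    rw [hsplit] at hmain
    have hE : X ^ (2 * n + 2) ∣
        (∏ i ∈ Finset.Ico n (2 * n - k), ((1 : S) - X ^ (2 * (i + 1))) - 1) :=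
      dvd_prod_sub_one (fun i hi => by have := (Finset.mem_Ico.mp hi).1; omega)
    -- (d qb - 1) * E' = (Ps - 1) - (E' - 1)
    have hiden : (dP n * qb (2 * n) k - 1)
          * ∏ i ∈ Finset.Ico n (2 * n - k), ((1 : S) - X ^ (2 * (i + 1)))
        = (∏ i ∈ range (2 * n - k), ((1 : S) - X ^ (2 * (k + i + 1))) - 1)
          - (∏ i ∈ Finset.Ico n (2 * n - k), ((1 : S) - X ^ (2 * (i + 1))) - 1) := by
      rw [← hmain]; ring
    have hdvd1 : X ^ (2 * k + 2) ∣ (dP n * qb (2 * n) k - 1)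
        * ∏ i ∈ Finset.Ico n (2 * n - k), ((1 : S) - X ^ (2 * (i + 1))) := by
      rw [hiden]
      exact dvd_sub hPs ((pow_dvd_pow X (by omega)).trans hE)
    have hdvd2 : X ^ (2 * k + 2) ∣ (dP n * qb (2 * n) k - 1) := by
      apply unit_cancel (u := ∏ i ∈ Finset.Ico n (2 * n - k), ((1 : S) - X ^ (2 * (i + 1))))
        (isUnit_prod_sub (fun i _ => by omega))
      rwa [mul_comm ((dP n * qb (2 * n) k - 1))
        (∏ i ∈ Finset.Ico n (2 * n - k), ((1 : S) - X ^ (2 * (i + 1))))] at hdvd1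
    obtain ⟨w, hw⟩ := hdvd2
    rw [hw, mul_comm (X ^ (2 * k + 2)) w, mul_assoc, ← pow_add]
    have hle : 2 * n + 1 ≤ 2 * k + 2 + dd n k ^ 2 := by
      rw [dd, if_pos h]
      zify [h]
      nlinarith [sq_nonneg ((n : ℤ) - k - 1)]
    exact (pow_dvd_pow X hle).mul_left w
  · -- r = 2n - k < n : dP n = ∏_{range r} * E2
    have hsplit : dP n
        = (∏ i ∈ range (2 * n - k), ((1 : S) - X ^ (2 * (i + 1))))
          * ∏ i ∈ Finset.Ico (2 * n - k) n, ((1 : S) - X ^ (2 * (i + 1))) := by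
      rw [dP, range_eq_Ico, ← Finset.prod_Ico_consecutive _ (Nat.zero_le (2 * n - k)) (by omega),
        ← range_eq_Ico]
    have hE2 : X ^ (2 * (2 * n - k) + 2) ∣
        (∏ i ∈ Finset.Ico (2 * n - k) n, ((1 : S) - X ^ (2 * (i + 1))) - 1) :=
      dvd_prod_sub_one (fun i hi => by have := (Finset.mem_Ico.mp hi).1; omega)
    have hiden : dP n * qb (2 * n) k - 1
        = (∏ i ∈ Finset.Ico (2 * n - k) n, ((1 : S) - X ^ (2 * (i + 1))) - 1)
            * (∏ i ∈ range (2 * n - k), ((1 : S) - X ^ (2 * (k + i + 1))))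
          + (∏ i ∈ range (2 * n - k), ((1 : S) - X ^ (2 * (k + i + 1))) - 1) := by
      rw [hsplit, mul_comm (∏ i ∈ range (2 * n - k), ((1 : S) - X ^ (2 * (i + 1)))) _,
        mul_assoc, hmain]
      ring
    have hdvd2 : X ^ (2 * (2 * n - k) + 2) ∣ (dP n * qb (2 * n) k - 1) := by
      rw [hiden]
      exact dvd_add (hE2.mul_right _) ((pow_dvd_pow X (by omega)).trans hPs)
    obtain ⟨w, hw⟩ := hdvd2
    rw [hw, mul_comm (X ^ (2 * (2 * n - k) + 2)) w, mul_assoc, ← pow_add]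
    have hle : 2 * n + 1 ≤ 2 * (2 * n - k) + 2 + dd n k ^ 2 := by
      rw [dd, if_neg (by omega)]
      zify [hk, show n ≤ k from by omega]
      nlinarith [sq_nonneg ((k : ℤ) - n - 1)]
    exact (pow_dvd_pow X hle).mul_left w

lemma Xpow_congr {a b : ℕ} (h : a = b) : (X : S) ^ a = X ^ b := by rw [h]

lemma neg_one_pow_par {a b : ℕ} (h : a % 2 = b % 2) : (-1 : S) ^ a = (-1 : S) ^ b := by
  conv_lhs => rw [← Nat.div_add_mod a 2]
  conv_rhs => rw [← Nat.div_add_mod b 2]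
  rw [pow_add, pow_add, pow_mul, pow_mul, neg_one_sq, one_pow, one_pow, one_mul, one_mul, h]

lemma theta_sum (n : ℕ) (hn : 1 ≤ n) :
    ∑ k ∈ range (2 * n + 1), (-1 : S) ^ (n + k) * X ^ (dd n k ^ 2) = gS n := by
  rw [range_eq_Ico, ← Finset.sum_Ico_consecutive _ (Nat.zero_le (n + 1))
    (show n + 1 ≤ 2 * n + 1 by omega), ← range_eq_Ico]
  have hA : ∑ k ∈ range (n + 1), (-1 : S) ^ (n + k) * X ^ (dd n k ^ 2)
      = ∑ j ∈ range n, (-1 : S) ^ (j + 1) * X ^ ((j + 1) ^ 2) + 1 := by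
    have e1 : ∑ k ∈ range (n + 1), (-1 : S) ^ (n + k) * X ^ (dd n k ^ 2)
        = ∑ k ∈ range (n + 1), (-1 : S) ^ (n + (n + 1 - 1 - k)) * X ^ ((n - (n + 1 - 1 - k)) ^ 2) := by
      rw [Finset.sum_range_reflect (fun k => (-1 : S) ^ (n + k) * X ^ ((n - k) ^ 2)) (n + 1)]
      apply Finset.sum_congr rfl
      intro k hk
      have hk' : k ≤ n := by have := Finset.mem_range.mp hk; omega
      congr 2
      rw [dd, if_pos hk']
    rw [e1]
    have e2 : ∀ k ∈ range (n + 1),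
        (-1 : S) ^ (n + (n + 1 - 1 - k)) * X ^ ((n - (n + 1 - 1 - k)) ^ 2)
          = (-1 : S) ^ k * X ^ (k ^ 2) := by
      intro k hk
      have hk' : k ≤ n := by have := Finset.mem_range.mp hk; omega
      rw [neg_one_pow_par (show (n + (n + 1 - 1 - k)) % 2 = k % 2 by omega),
        Xpow_congr (show (n - (n + 1 - 1 - k)) ^ 2 = k ^ 2 by rw [show n - (n + 1 - 1 - k) = k from by omega])]
    rw [Finset.sum_congr rfl e2, Finset.sum_range_succ' (fun k => (-1 : S) ^ k * X ^ (k ^ 2)) n]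
    simp
  have hB : ∑ k ∈ Finset.Ico (n + 1) (2 * n + 1), (-1 : S) ^ (n + k) * X ^ (dd n k ^ 2)
      = ∑ j ∈ range n, (-1 : S) ^ (j + 1) * X ^ ((j + 1) ^ 2) := by
    rw [Finset.sum_Ico_eq_sum_range, show 2 * n + 1 - (n + 1) = n from by omega]
    apply Finset.sum_congr rfl
    intro t ht
    rw [neg_one_pow_par (show (n + (n + 1 + t)) % 2 = (t + 1) % 2 by omega),
      Xpow_congr (show dd n (n + 1 + t) ^ 2 = (t + 1) ^ 2 by
        rw [dd, if_neg (by omega), show n + 1 + t - n = t + 1 from by omega])]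
  rw [hA, hB, gS]
  have hh : ∀ j ∈ range n, 2 * (-1 : S) ^ (j + 1) * X ^ ((j + 1) ^ 2)
      = (-1 : S) ^ (j + 1) * X ^ ((j + 1) ^ 2) + (-1 : S) ^ (j + 1) * X ^ ((j + 1) ^ 2) := by
    intro j _
    ring
  rw [Finset.sum_congr rfl hh, Finset.sum_add_distrib]
  ring

lemma gauss_trunc (n : ℕ) (hn : 1 ≤ n) :
    X ^ (2 * n + 1) ∣ (dP n * cP n ^ 2 - gS n) := by
  have hG := G2 n hn
  rw [show (∏ t ∈ range n, ((1 : S) - X ^ (2 * t + 1))) = cP n from rfl] at hG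
  have h1 : dP n * cP n ^ 2
      = ∑ k ∈ range (2 * n + 1),
          (-1 : S) ^ (n + k) * (dP n * qb (2 * n) k) * X ^ (dd n k ^ 2) := by
    rw [hG, Finset.mul_sum]
    apply Finset.sum_congr rfl
    intro k _
    ring
  have h2 : dP n * cP n ^ 2 - gS n
      = ∑ k ∈ range (2 * n + 1),
          (-1 : S) ^ (n + k) * ((dP n * qb (2 * n) k - 1) * X ^ (dd n k ^ 2)) := by
    rw [h1, ← theta_sum n hn, ← Finset.sum_sub_distrib]
    apply Finset.sum_congr rfl
    intro k _
    ring
  rw [h2]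
  exact Finset.dvd_sum (fun k hk =>
    (dqb hn (by have := Finset.mem_range.mp hk; omega)).mul_left _)

def aP (m : ℕ) : S := ∏ i ∈ range m, ((1 : S) - X ^ (i + 1))
def bP (m : ℕ) : S := ∏ i ∈ range m, ((1 : S) + X ^ (i + 1))

lemma sq_mod8 (j : ℕ) : j ^ 2 % 8 = 0 ∨ j ^ 2 % 8 = 1 ∨ j ^ 2 % 8 = 4 := by
  have h : j ^ 2 % 8 = (j % 8) ^ 2 % 8 := Nat.pow_mod j 2 8
  have h8 : j % 8 < 8 := Nat.mod_lt _ (by norm_num)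
  interval_cases hj : (j % 8) <;> simp_all

lemma pow4_eq (f : S) : ((1 : S) + f) ^ 4 = (1 - f) ^ 4 := by
  have h : ((1 : S) + f) ^ 4 = (1 - f) ^ 4 + 8 * (f + f ^ 3) := by ring
  rw [h, eight_eq_zero, zero_mul, add_zero]

lemma b4_eq_a4 (m : ℕ) : bP m ^ 4 = aP m ^ 4 := by
  rw [aP, bP, ← Finset.prod_pow, ← Finset.prod_pow]
  exact Finset.prod_congr rfl (fun i _ => pow4_eq _)

lemma ab_eq_d (m : ℕ) : aP m * bP m = dP m := by
  rw [aP, bP, dP, ← Finset.prod_mul_distrib]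
  apply Finset.prod_congr rfl
  intro i _
  have h : ((1 : S) - X ^ (i + 1)) * (1 + X ^ (i + 1)) = 1 - X ^ (i + 1) * X ^ (i + 1) := by ring
  rw [h, ← pow_add]
  congr 2
  omega

lemma aP_split (m : ℕ) : aP (2 * m) = cP m * dP m := by
  induction m with
  | zero => simp [aP, cP, dP]
  | succ m ih =>
    have h1 : aP (2 * (m + 1)) = aP (2 * m) * (1 - X ^ (2 * m + 1)) * (1 - X ^ (2 * (m + 1))) := by
      rw [aP, show 2 * (m + 1) = (2 * m + 1) + 1 from by omega, Finset.prod_range_succ,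
        Finset.prod_range_succ, ← aP]
    have h2 : cP (m + 1) = cP m * (1 - X ^ (2 * m + 1)) := by
      rw [cP, Finset.prod_range_succ, cP]
    have h3 : dP (m + 1) = dP m * (1 - X ^ (2 * (m + 1))) := by
      rw [dP, Finset.prod_range_succ, dP]
    rw [h1, h2, h3, ih]
    ring

lemma aP_add (m : ℕ) : aP (2 * m) = aP m * ∏ i ∈ range m, ((1 : S) - X ^ (m + i + 1)) := by
  rw [aP, two_mul, Finset.prod_range_add, ← aP]

lemma isUnit_aP (m : ℕ) : IsUnit (aP m) := by
  rw [aP]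
  exact isUnit_prod_sub (fun i _ => by omega)

/-- The chain: `X^(m+1) ∣ aP m - gS m * bP m`. -/
lemma a_sub_gb (m : ℕ) (hm : 1 ≤ m) : X ^ (m + 1) ∣ (aP m - gS m * bP m) := by
  have he : X ^ (m + 1) ∣ (∏ i ∈ range m, ((1 : S) - X ^ (m + i + 1)) - 1) :=
    dvd_prod_sub_one (fun i _ => by omega)
  have h11 : X ^ (m + 1) ∣ (aP m - cP m * dP m) := by
    have hid : aP m - cP m * dP m
        = aP m * (1 - ∏ i ∈ range m, ((1 : S) - X ^ (m + i + 1))) := by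
      rw [mul_sub, mul_one, ← aP_add, aP_split]
    rw [hid]
    have : (1 : S) - ∏ i ∈ range m, ((1 : S) - X ^ (m + i + 1))
        = -(∏ i ∈ range m, ((1 : S) - X ^ (m + i + 1)) - 1) := by ring
    rw [this]
    exact (he.neg_right).mul_left _
  have h12 : X ^ (m + 1) ∣ (cP m * bP m - 1) := by
    apply unit_cancel (u := aP m) (isUnit_aP m)
    have hid : aP m * (cP m * bP m - 1) = -(aP m - cP m * dP m) := by
      have : cP m * (aP m * bP m) = cP m * dP m := by rw [ab_eq_d]
      calc aP m * (cP m * bP m - 1) = cP m * (aP m * bP m) - aP m := by ring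
        _ = -(aP m - cP m * dP m) := by rw [this]; ring
    rw [hid]
    exact h11.neg_right
  have h13 : X ^ (m + 1) ∣ (dP m * cP m ^ 2 - gS m) :=
    (pow_dvd_pow X (by omega)).trans (gauss_trunc m hm)
  -- a - g*b = (a - c*d) - (g - d*c^2)*b - d*c*(c*b - 1)
  have hid : aP m - gS m * bP m
      = (aP m - cP m * dP m) + (dP m * cP m ^ 2 - gS m) * bP m
        - dP m * cP m * (cP m * bP m - 1) := by ring
  rw [hid]
  exact dvd_sub (dvd_add h11 (h13.mul_right _)) (h12.mul_left _)

lemma C_neg_one_pow (j : ℕ) : (PowerSeries.C (R := ZMod 8)) ((-1 : ZMod 8) ^ j) = (-1 : S) ^ j := by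
  rw [map_pow, map_neg, map_one]

/-- coefficient of the cube of `gS` vanishes at the relevant indices. -/
lemma coeff_gS_cubed (m : ℕ) (hm : m % 8 = 3 ∨ m % 8 = 5 ∨ m % 8 = 6) :
    PowerSeries.coeff (R := ZMod 8) m (gS m ^ 3) = 0 := by
  have hm1 : 1 ≤ m := by omega
  have hnsq : ∀ j : ℕ, m ≠ (j + 1) ^ 2 := by
    intro j h
    have h1 := sq_mod8 (j + 1)
    omega
  have hn2 : ∀ j : ℕ, m ≠ (j + 1) ^ 2 + (j + 1) ^ 2 := by
    intro j h
    have h1 := sq_mod8 (j + 1)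
    omega
  set θ : S := ∑ j ∈ range m, (-1 : S) ^ (j + 1) * X ^ ((j + 1) ^ 2) with hθ
  have hgθ : gS m = 1 + 2 * θ := by
    rw [gS, hθ, Finset.mul_sum]
    congr 1
    exact Finset.sum_congr rfl (fun j _ => by ring)
  have hg3 : gS m ^ 3 = 1 + 6 * θ + 12 * θ ^ 2 := by
    have h : ((1 : S) + 2 * θ) ^ 3 = 1 + 6 * θ + 12 * θ ^ 2 + 8 * θ ^ 3 := by ring
    rw [hgθ, h, eight_eq_zero, zero_mul, add_zero]
  rw [hg3, map_add, map_add]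
  -- coeff of 1
  have hc1 : PowerSeries.coeff (R := ZMod 8) m 1 = 0 := by
    rw [PowerSeries.coeff_one, if_neg (by omega)]
  -- coeff of 6θ
  have hc2 : PowerSeries.coeff (R := ZMod 8) m (6 * θ) = 0 := by
    rw [hθ, Finset.mul_sum, map_sum]
    apply Finset.sum_eq_zero
    intro j _
    have hterm : (6 : S) * ((-1 : S) ^ (j + 1) * X ^ ((j + 1) ^ 2))
        = (PowerSeries.C (R := ZMod 8)) (6 * (-1 : ZMod 8) ^ (j + 1)) * X ^ ((j + 1) ^ 2) := by
      rw [map_mul, C_neg_one_pow, map_ofNat]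
      ring
    rw [hterm, PowerSeries.coeff_C_mul, PowerSeries.coeff_X_pow, if_neg (hnsq j), mul_zero]
  -- coeff of 12θ²
  have hc3 : PowerSeries.coeff (R := ZMod 8) m (12 * θ ^ 2) = 0 := by
    have hexp : (12 : S) * θ ^ 2
        = ∑ p ∈ range m ×ˢ range m,
            (PowerSeries.C (R := ZMod 8)) (12 * (-1 : ZMod 8) ^ (p.1 + 1) * (-1 : ZMod 8) ^ (p.2 + 1))
              * X ^ ((p.1 + 1) ^ 2 + (p.2 + 1) ^ 2) := by
      rw [sq, hθ, Finset.sum_mul_sum, Finset.mul_sum, Finset.sum_product]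
      apply Finset.sum_congr rfl
      intro j _
      rw [Finset.mul_sum]
      apply Finset.sum_congr rfl
      intro i _
      rw [map_mul, map_mul, C_neg_one_pow, C_neg_one_pow, map_ofNat, pow_add]
      ring
    rw [hexp, map_sum]
    apply Finset.sum_involution (fun p _ => Prod.swap p)
    · intro p hmem
      rw [PowerSeries.coeff_C_mul, PowerSeries.coeff_C_mul, PowerSeries.coeff_X_pow,
        PowerSeries.coeff_X_pow, Prod.fst_swap, Prod.snd_swap,
        if_congr (show (m = (p.2 + 1) ^ 2 + (p.1 + 1) ^ 2) ↔ (m = (p.1 + 1) ^ 2 + (p.2 + 1) ^ 2)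
          from by rw [Nat.add_comm ((p.2 + 1) ^ 2)]) rfl rfl]
      have h24 : (24 : ZMod 8) = 0 := by decide
      have : (12 * (-1 : ZMod 8) ^ (p.1 + 1) * (-1 : ZMod 8) ^ (p.2 + 1))
            * (if m = (p.1 + 1) ^ 2 + (p.2 + 1) ^ 2 then (1 : ZMod 8) else 0)
          + (12 * (-1 : ZMod 8) ^ (p.2 + 1) * (-1 : ZMod 8) ^ (p.1 + 1))
            * (if m = (p.1 + 1) ^ 2 + (p.2 + 1) ^ 2 then (1 : ZMod 8) else 0)
          = 24 * ((-1 : ZMod 8) ^ (p.1 + 1) * (-1 : ZMod 8) ^ (p.2 + 1))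
            * (if m = (p.1 + 1) ^ 2 + (p.2 + 1) ^ 2 then (1 : ZMod 8) else 0) := by ring
      rw [this, h24, zero_mul, zero_mul]
    · intro p hmem hp hswap
      exfalso
      apply hp
      have hpp : p.2 = p.1 := congrArg Prod.fst hswap
      rw [PowerSeries.coeff_C_mul, PowerSeries.coeff_X_pow, hpp,
        if_neg (hn2 p.1), mul_zero]
    · intro p hp
      rw [Finset.mem_product] at hp ⊢
      exact ⟨hp.2, hp.1⟩
    · intro p hp
      rfl
  rw [hc1, hc2, hc3, add_zero, add_zero]

lemma prod_Icc_eq_range {f : ℕ → S} (m : ℕ) :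
    ∏ k ∈ Finset.Icc 1 m, f k = ∏ i ∈ range m, f (i + 1) := by
  rw [← Finset.Ico_add_one_right_eq_Icc, Finset.prod_Ico_eq_prod_range]
  exact Finset.prod_congr rfl (fun i _ => by rw [Nat.add_comm])

lemma key (m : ℕ) (hm : m % 8 = 3 ∨ m % 8 = 5 ∨ m % 8 = 6) :
    ((pbar 5 m : ℤ) : ZMod 8) = 0 := by
  have hm1 : 1 ≤ m := by omega
  set π := Int.castRingHom (ZMod 8) with hπ
  -- constant coefficient of the ℤ-side denominator
  have hconst : PowerSeries.constantCoeff (R := ℤ)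
      (∏ k ∈ Finset.Icc 1 m, (1 - PowerSeries.X ^ k) ^ (2 * 5)) = 1 := by
    rw [map_prod]
    apply Finset.prod_eq_one
    intro k hk
    have hk1 : 1 ≤ k := (Finset.mem_Icc.mp hk).1
    rw [map_pow, map_sub, map_one, map_pow, PowerSeries.constantCoeff_X,
      zero_pow (by omega), sub_zero, one_pow]
  have hinv := PowerSeries.mul_invOfUnit
    ((∏ k ∈ Finset.Icc 1 m, (1 - PowerSeries.X ^ k) ^ (2 * 5) : PowerSeries ℤ)) 1
    (by rw [hconst]; simp)
  set W : S := PowerSeries.map π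
    (PowerSeries.invOfUnit (∏ k ∈ Finset.Icc 1 m, (1 - PowerSeries.X ^ k) ^ (2 * 5)) 1) with hW
  -- mapped products
  have hmap1 : PowerSeries.map π (∏ k ∈ Finset.Icc 1 m, (1 - PowerSeries.X ^ k) ^ (2 * 5))
      = aP m ^ (2 * 5) := by
    rw [map_prod]
    have : ∀ k ∈ Finset.Icc 1 m,
        PowerSeries.map π ((1 - PowerSeries.X ^ k) ^ (2 * 5)) = ((1 : S) - X ^ k) ^ (2 * 5) := by
      intro k _
      rw [map_pow, map_sub, map_one, map_pow, PowerSeries.map_X]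
    rw [Finset.prod_congr rfl this, Finset.prod_pow, prod_Icc_eq_range]
    rfl
  have hZ : aP m ^ (2 * 5) * W = 1 := by
    have h := congrArg (PowerSeries.map π) hinv
    rw [map_mul, map_one, hmap1] at h
    exact h
  -- the coefficient identification
  have hpb : ((pbar 5 m : ℤ) : ZMod 8)
      = PowerSeries.coeff (R := ZMod 8) m (dP m ^ 5 * W) := by
    rw [pbar]
    rw [show ((PowerSeries.coeff (R := ℤ) m) ((∏ k ∈ Finset.Icc 1 m, (1 - PowerSeries.X ^ (2 * k)) ^ 5) *
        PowerSeries.invOfUnit (∏ k ∈ Finset.Icc 1 m, (1 - PowerSeries.X ^ k) ^ (2 * 5)) 1) : ZMod 8)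
      = PowerSeries.coeff (R := ZMod 8) m (PowerSeries.map π
          ((∏ k ∈ Finset.Icc 1 m, (1 - PowerSeries.X ^ (2 * k)) ^ 5) *
            PowerSeries.invOfUnit (∏ k ∈ Finset.Icc 1 m, (1 - PowerSeries.X ^ k) ^ (2 * 5)) 1))
      from by rw [PowerSeries.coeff_map]; rfl]
    rw [map_mul]
    congr 2
    rw [map_prod]
    have : ∀ k ∈ Finset.Icc 1 m,
        PowerSeries.map π ((1 - PowerSeries.X ^ (2 * k)) ^ 5) = ((1 : S) - X ^ (2 * k)) ^ 5 := by
      intro k _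
      rw [map_pow, map_sub, map_one, map_pow, PowerSeries.map_X]
    rw [Finset.prod_congr rfl this, Finset.prod_pow, prod_Icc_eq_range]
    rfl
  -- algebraic reduction
  have hd5 : dP m ^ 5 = aP m ^ 9 * bP m := by
    have h1 : dP m ^ 5 = (aP m * bP m) ^ 5 := by rw [ab_eq_d]
    have h2 : (aP m * bP m) ^ 5 = aP m ^ 5 * (bP m ^ 4 * bP m) := by ring
    rw [h1, h2, b4_eq_a4]
    ring
  have hXW : aP m * (dP m ^ 5 * W) = bP m := by
    have h1 : aP m * (dP m ^ 5 * W) = (aP m ^ (2 * 5) * W) * bP m := by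
      rw [hd5]; ring
    rw [h1, hZ, one_mul]
  -- g^4 = 1
  have hg4 : gS m ^ 4 = 1 := by
    have hgθ : gS m = 1 + 2 * (∑ j ∈ range m, (-1 : S) ^ (j + 1) * X ^ ((j + 1) ^ 2)) := by
      rw [gS, Finset.mul_sum]
      congr 1
      exact Finset.sum_congr rfl (fun j _ => by ring)
    set θ : S := ∑ j ∈ range m, (-1 : S) ^ (j + 1) * X ^ ((j + 1) ^ 2)
    have h : ((1 : S) + 2 * θ) ^ 4 = 1 + 8 * (θ + 3 * θ ^ 2 + 4 * θ ^ 3 + 2 * θ ^ 4) := by ring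
    rw [hgθ, h, eight_eq_zero, zero_mul, add_zero]
  -- the main divisibility
  have hfin : X ^ (m + 1) ∣ (dP m ^ 5 * W - gS m ^ 3) := by
    apply unit_cancel (u := aP m) (isUnit_aP m)
    have hid : aP m * (dP m ^ 5 * W - gS m ^ 3)
        = bP m - aP m * gS m ^ 3 := by rw [mul_sub, hXW]
    have hid2 : bP m - aP m * gS m ^ 3 = -(gS m ^ 3 * (aP m - gS m * bP m)) := by
      have h4 : gS m ^ 3 * (gS m * bP m) = bP m := by
        have : gS m ^ 3 * (gS m * bP m) = gS m ^ 4 * bP m := by ring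
        rw [this, hg4, one_mul]
      calc bP m - aP m * gS m ^ 3
          = gS m ^ 3 * (gS m * bP m) - aP m * gS m ^ 3 := by rw [h4]
        _ = -(gS m ^ 3 * (aP m - gS m * bP m)) := by ring
    rw [hid, hid2]
    exact ((a_sub_gb m hm1).mul_left _).neg_right
  have hcoeff : PowerSeries.coeff (R := ZMod 8) m (dP m ^ 5 * W)
      = PowerSeries.coeff (R := ZMod 8) m (gS m ^ 3) := by
    have h0 := coeff_eq_zero_of_dvd hfin (Nat.lt_succ_self m)
    rw [map_sub] at h0
    exact sub_eq_zero.mp h0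
  rw [hpb, hcoeff, coeff_gS_cubed m hm]

end
end OPAux

theorem pbar5_8n3_8n5_8n6_mod8 (n : ℕ) :
    pbar 5 (8 * n + 3) ≡ 0 [ZMOD 8] ∧ pbar 5 (8 * n + 5) ≡ 0 [ZMOD 8] ∧
      pbar 5 (8 * n + 6) ≡ 0 [ZMOD 8] := by
  refine ⟨?_, ?_, ?_⟩
  · have h := OPAux.key (8 * n + 3) (by omega)
    rw [ZMod.intCast_zmod_eq_zero_iff_dvd] at h
    exact Int.modEq_zero_iff_dvd.mpr (by exact_mod_cast h)
  · have h := OPAux.key (8 * n + 5) (by omega)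
    rw [ZMod.intCast_zmod_eq_zero_iff_dvd] at h
    exact Int.modEq_zero_iff_dvd.mpr (by exact_mod_cast h)
  · have h := OPAux.key (8 * n + 6) (by omega)
    rw [ZMod.intCast_zmod_eq_zero_iff_dvd] at h
    exact Int.modEq_zero_iff_dvd.mpr (by exact_mod_cast h)
end

section
/- For all integers n ≥ 0, the number of 7-colored overpartitions satisfies p̄_{-7}(8n+1) ≡ 0 (mod 2) and p̄_{-7}(8n+4) ≡ 0 (mod 2). -/
open PowerSeries in
lemma pbar7_even (N : ℕ) (hN : N ≠ 0) : (2:ℤ) ∣ pbar 7 N := by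
  classical
  set B : ℤ⟦X⟧ := ∏ k ∈ Finset.Icc 1 N, (1 - PowerSeries.X ^ k) ^ (2 * 7) with hBdef
  have hB1 : constantCoeff (R := ℤ) B = 1 := by
    rw [hBdef, map_prod]
    refine Finset.prod_eq_one fun k hk => ?_
    have hk1 : k ≠ 0 := by
      have := (Finset.mem_Icc.mp hk).1; omega
    simp [constantCoeff_X, zero_pow hk1]
  have hinv : B * invOfUnit B 1 = 1 := mul_invOfUnit B 1 (by rw [hB1]; rfl)
  set φ := PowerSeries.map (Int.castRingHom (ZMod 2))
  have h2 : (2 : (ZMod 2)⟦X⟧) = 0 := by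
    have : (2 : (ZMod 2)⟦X⟧) = PowerSeries.C (R := ZMod 2) 2 := by
      simp [← map_ofNat (PowerSeries.C (R := ZMod 2)) 2]
    rw [this, show (2:ZMod 2) = 0 from rfl, map_zero]
  have key : ∀ k : ℕ, ((1 - PowerSeries.X ^ k : (ZMod 2)⟦X⟧)) ^ (2*7)
      = (1 - PowerSeries.X ^ (2*k)) ^ 7 := by
    intro k
    have hsq : ((1 - PowerSeries.X ^ k : (ZMod 2)⟦X⟧)) ^ 2 = 1 - PowerSeries.X ^ (2*k) := by
      have hx : (PowerSeries.X ^ (2*k) : (ZMod 2)⟦X⟧) = (PowerSeries.X ^ k)^2 := by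
        rw [← pow_mul, mul_comm]
      rw [hx]
      generalize (PowerSeries.X ^ k : (ZMod 2)⟦X⟧) = a
      linear_combination (a ^ 2 - a) * h2
    calc ((1 - PowerSeries.X ^ k : (ZMod 2)⟦X⟧)) ^ (2*7)
        = (((1 - PowerSeries.X ^ k : (ZMod 2)⟦X⟧)) ^ 2) ^ 7 := by rw [← pow_mul]
      _ = (1 - PowerSeries.X ^ (2*k)) ^ 7 := by rw [hsq]
  have hAB : φ (∏ k ∈ Finset.Icc 1 N, (1 - PowerSeries.X ^ (2 * k)) ^ 7) = φ B := by
    rw [hBdef, map_prod, map_prod]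
    refine Finset.prod_congr rfl fun k _ => ?_
    simp only [map_pow, map_sub, map_one, PowerSeries.map_X, φ]
    rw [key]
  have hone : φ ((∏ k ∈ Finset.Icc 1 N, (1 - PowerSeries.X ^ (2 * k)) ^ 7) * invOfUnit B 1)
      = 1 := by
    rw [map_mul, hAB, ← map_mul, hinv, map_one]
  have hc := congrArg (PowerSeries.coeff (R := ZMod 2) N) hone
  rw [PowerSeries.coeff_map, PowerSeries.coeff_one, if_neg hN] at hc
  have := (ZMod.intCast_zmod_eq_zero_iff_dvd _ 2).mp (by exact_mod_cast hc)
  exact_mod_cast this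

theorem pbar7_8n1_8n4_mod2 (n : ℕ) :
    pbar 7 (8 * n + 1) ≡ 0 [ZMOD 2] ∧ pbar 7 (8 * n + 4) ≡ 0 [ZMOD 2] := by
  exact ⟨Int.modEq_zero_iff_dvd.mpr (pbar7_even _ (by omega)),
    Int.modEq_zero_iff_dvd.mpr (pbar7_even _ (by omega))⟩
end

section
/- For all integers n ≥ 0, the number of 7-colored overpartitions satisfies p̄_{-7}(8n+2) ≡ 0 (mod 16). -/
open Finset

namespace Pbar7

variable {R : Type*} [CommRing R]

def qb (t : R) : ℕ → ℕ → R
  | _, 0 => 1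
  | 0, _+1 => 0
  | n+1, k+1 => qb t n k + t^(k+1) * qb t n (k+1)
@[simp] lemma qb_zero_right (t : R) (n : ℕ) : qb t n 0 = 1 := by cases n <;> rfl
@[simp] lemma qb_zero_left (t : R) (k : ℕ) : qb t 0 (k+1) = 0 := rfl
lemma qb_succ (t : R) (n k : ℕ) :
    qb t (n+1) (k+1) = qb t n k + t^(k+1) * qb t n (k+1) := rfl
lemma qb_eq_zero (t : R) : ∀ {n k : ℕ}, n < k → qb t n k = 0 := by
  intro n
  induction n with
  | zero => intro k hk; match k, hk with | k+1, _ => rfl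
  | succ n ih =>
    intro k hk
    match k, hk with
    | k+1, hk => rw [qb_succ, ih (by omega), ih (by omega)]; ring
lemma qb_pascal' (t : R) : ∀ (n k : ℕ),
    qb t (n+1) (k+1) = t^(n-k) * qb t n k + qb t n (k+1) := by
  intro n
  induction n with
  | zero =>
    intro k
    cases k with
    | zero => simp [qb_succ]
    | succ k => simp [qb_succ, qb_eq_zero t (show (0:ℕ) < k+1 by omega),
        qb_eq_zero t (show (0:ℕ) < k+2 by omega)]
  | succ n ih =>
    intro k
    cases k with
    | zero =>
      conv_lhs => rw [qb_succ, ih 0]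
      conv_rhs => rw [qb_succ]
      simp only [qb_zero_right, Nat.sub_zero, mul_one, pow_one, pow_succ]
      ring
    | succ k =>
      conv_lhs => rw [qb_succ, ih k, ih (k+1)]
      conv_rhs => rw [qb_succ]
      conv_rhs => rw [qb_succ]
      have e1 : n + 1 - (k+1) = n - k := by omega
      rw [e1]
      rcases le_or_gt (k+1) n with h | h
      · have e2 : t^(k+1+1) * t^(n-(k+1)) = t^(n-k) * t^(k+1) := by
          rw [← pow_add, ← pow_add]; congr 1; omega
        calc t^(n-k) * qb t n k + qb t n (k+1)
              + t^(k+1+1) * (t^(n-(k+1)) * qb t n (k+1) + qb t n (k+1+1))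
            = t^(n-k) * qb t n k + qb t n (k+1)
              + (t^(k+1+1) * t^(n-(k+1))) * qb t n (k+1)
              + t^(k+1+1) * qb t n (k+1+1) := by ring
          _ = _ := by rw [e2]; ring
      · rw [qb_eq_zero t (show n < k+1 by omega), qb_eq_zero t (show n < k+2 by omega)]
        ring

def sqd (i N : ℕ) : ℕ := (i - N)^2 + (N - i)^2
lemma sqd_cast (i N : ℕ) : (sqd i N : ℤ) = ((i:ℤ) - N)^2 := by
  rcases le_total i N with h | h
  · have h0 : i - N = 0 := by omega
    have : (sqd i N : ℤ) = ((N - i : ℕ) : ℤ)^2 := by simp [sqd, h0]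
    rw [this, Nat.cast_sub h]; ring
  · have h0 : N - i = 0 := by omega
    rw [sqd, h0]
    push_cast [Nat.cast_sub h]
    ring
lemma sqd_succ_succ (i N : ℕ) : sqd (i+1) (N+1) = sqd i N := by
  simp [sqd, Nat.succ_sub_succ]

/-- coefficient family for the finite Jacobi triple product -/
def jc (q : R) (N i : ℕ) : R := qb (q^2) (2*N) i * q^(sqd i N)

lemma jc_eq_zero (q : R) {N i : ℕ} (hi : 2*N < i) : jc q N i = 0 := by
  rw [jc, qb_eq_zero _ hi, zero_mul]

lemma pow_two_pow (q : R) (e : ℕ) : (q^2)^e = q^(2*e) := by rw [pow_mul]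

lemma jc_rec (q : R) (N j : ℕ) :
    jc q (N+1) (j+2) = q^(2*N+1) * jc q N (j+2) + (1 + q^(4*N+2)) * jc q N (j+1)
      + q^(2*N+1) * jc q N j := by
  rcases le_or_gt j (2*N) with hj | hj
  · have h2 : 2*(N+1) = 2*N+1+1 := by ring
    rw [jc, h2, qb_succ, qb_pascal' _ (2*N) j, qb_pascal' _ (2*N) (j+1)]
    rw [sqd_succ_succ]
    -- expand
    have e1 : 2*(2*N-j) + sqd (j+1) N = 2*N+1+ sqd j N := by
      have h1 := sqd_cast (j+1) N; have h0 := sqd_cast j N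
      zify [hj]; rw [h1, h0]; push_cast; ring
    have e3 : 2*(j+2) + sqd (j+1) N = 2*N+1 + sqd (j+2) N := by
      have h1 := sqd_cast (j+1) N; have h0 := sqd_cast (j+2) N
      zify; rw [h1, h0]; push_cast; ring
    rcases le_or_gt (j+1) (2*N) with hj1 | hj1
    · have e2 : 2*(j+2) + 2*(2*N-(j+1)) = 4*N+2 := by omega
      calc ((q^2)^(2*N-j) * qb (q^2) (2*N) j + qb (q^2) (2*N) (j+1)
            + (q^2)^(j+1+1) * ((q^2)^(2*N-(j+1)) * qb (q^2) (2*N) (j+1) + qb (q^2) (2*N) (j+1+1)))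
            * q^(sqd (j+1) N)
          = (q^(2*(2*N-j)) * q^(sqd (j+1) N)) * qb (q^2) (2*N) j
            + (1 + q^(2*(j+2)) * q^(2*(2*N-(j+1)))) * qb (q^2) (2*N) (j+1) * q^(sqd (j+1) N)
            + (q^(2*(j+2)) * q^(sqd (j+1) N)) * qb (q^2) (2*N) (j+1+1) := by
            rw [pow_two_pow q (2*N-j), pow_two_pow q (2*N-(j+1)), pow_two_pow q (j+1+1)]
            have ee : 2*(j+1+1) = 2*(j+2) := by ring
            rw [ee]; ring
        _ = _ := by
            rw [← pow_add, ← pow_add, ← pow_add, e1, e3, e2, jc, jc, jc,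
              pow_add, pow_add]
            ring
    · -- j = 2N exactly; the qb (2N) (j+1), (j+2) vanish
      have hj2 : j = 2*N := by omega
      subst hj2
      rw [qb_eq_zero _ (by omega : 2*N < 2*N+1), qb_eq_zero _ (by omega : 2*N < 2*N+2)]
      rw [jc, jc, qb_eq_zero _ (by omega : 2*N < 2*N+1),
        qb_eq_zero _ (by omega : 2*N < 2*N+2)]
      calc ((q^2)^(2*N-2*N) * qb (q^2) (2*N) (2*N) + 0 + (q^2)^(2*N+1+1) * ((q^2)^(2*N-(2*N+1)) * 0 + 0))
            * q^(sqd (2*N+1) N)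
          = (q^(2*(2*N-2*N)) * q^(sqd (2*N+1) N)) * qb (q^2) (2*N) (2*N) := by
            rw [pow_two_pow q (2*N-2*N)]; ring
        _ = _ := by
            rw [← pow_add, e1, jc, pow_add]
            ring
  · -- j > 2N : everything vanishes
    rw [jc_eq_zero _ (by omega), jc_eq_zero _ (by omega), jc_eq_zero _ (by omega),
      jc_eq_zero _ (by omega)]
    ring

def pr (t : R) (n : ℕ) : R := ∏ j ∈ Ioc 0 n, (1 - t^j)
@[simp] lemma pr_zero (t : R) : pr t 0 = 1 := by simp [pr]
lemma pr_succ (t : R) (n : ℕ) : pr t (n+1) = pr t n * (1 - t^(n+1)) := by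
  rw [pr, pr, prod_Ioc_succ_top (Nat.zero_le n)]

lemma qb_mul_pr (t : R) : ∀ n k, k ≤ n →
    qb t n k * pr t k * pr t (n-k) = pr t n := by
  intro n
  induction n with
  | zero => intro k hk; interval_cases k; simp
  | succ n ih =>
    intro k hk
    cases k with
    | zero => simp
    | succ k =>
      rcases lt_or_eq_of_le hk with h | h
      · have hk' : k + 1 ≤ n := by omega
        have hnk : n + 1 - (k+1) = (n - (k+1)) + 1 := by omega
        have e : (n:ℕ) - (k+1) + 1 = n - k := by omega
        rw [qb_succ, hnk, pr_succ, pr_succ, pr_succ, e]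
        have h1 := ih k (by omega)
        have h2 := ih (k+1) hk'
        have hprk : pr t (n - k) = pr t (n - (k+1)) * (1 - t^(n-k)) := by
          rw [← e, pr_succ, e]
        rw [hprk] at h1
        rw [pr_succ] at h2
        have et : t^(k+1) * t^(n-k) = t^(n+1) := by
          rw [← pow_add]; congr 1; omega
        linear_combination (1-t^(k+1)) * h1 + t^(k+1)*(1-t^(n-k)) * h2 - pr t n * et
      · have hk0 : k = n := by omega
        subst hk0
        rw [qb_succ, Nat.sub_self, pr_zero, mul_one,
          qb_eq_zero t (by omega : k < k+1), pr_succ]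
        have := ih k (le_refl k)
        rw [Nat.sub_self, pr_zero, mul_one] at this
        linear_combination (1 - t^(k+1)) * this

section JTPpart
open Polynomial

lemma jc_b0 (q : R) (N : ℕ) : jc q (N+1) 0 = q^(2*N+1) * jc q N 0 := by
  rw [jc, jc, qb_zero_right, qb_zero_right, one_mul, one_mul, ← pow_add]
  congr 1
  have h1 := sqd_cast 0 (N+1); have h2 := sqd_cast 0 N
  zify; rw [h1, h2]; push_cast; ring

lemma jc_b1 (q : R) (N : ℕ) :
    jc q (N+1) 1 = q^(2*N+1) * jc q N 1 + (1 + q^(4*N+2)) * jc q N 0 := by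
  have h2 : 2*(N+1) = 2*N+1+1 := by ring
  rw [jc, h2, qb_succ, qb_pascal' _ (2*N) 0]
  rw [qb_zero_right, qb_zero_right, mul_one]
  have hs : sqd 1 (N+1) = sqd 0 N := sqd_succ_succ 0 N
  have e1 : 2*1 + sqd 1 (N+1) = 2*N+1 + sqd 1 N := by
    have a1 := sqd_cast 1 (N+1); have a2 := sqd_cast 1 N
    zify; rw [a1, a2]; push_cast; ring
  calc (1 + (q^2)^(0+1) * ((q^2)^(2*N-0) + qb (q^2) (2*N) (0+1))) * q^(sqd 1 (N+1))
      = q^(sqd 1 (N+1)) + q^(2*(2*N)) * q^(2*1) * q^(sqd 1 (N+1))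
        + (q^(2*1) * q^(sqd 1 (N+1))) * qb (q^2) (2*N) 1 := by
        rw [pow_two_pow q (0+1), pow_two_pow q (2*N-0)]
        norm_num; ring
    _ = _ := by
        rw [jc, jc, qb_zero_right, mul_one, hs]
        have A : q^(2*(2*N)) * q^(2*1) = q^(4*N+2) := by
          rw [← pow_add]; congr 1; omega
        have B : q^(2*1) * q^(sqd 0 N) = q^(2*N+1) * q^(sqd 1 N) := by
          rw [← pow_add, ← pow_add]; congr 1; omega
        linear_combination q^(sqd 0 N) * A + qb (q^2) (2*N) 1 * B

lemma coeff_jcsum (q : R) (N n : ℕ) :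
    (∑ i ∈ range (2*N+1), C (jc q N i) * X^i).coeff n = jc q N n := by
  rw [finset_sum_coeff]
  simp only [coeff_C_mul, coeff_X_pow, mul_ite, mul_one, mul_zero]
  rw [Finset.sum_ite_eq (range (2*N+1)) n (fun i => jc q N i)]
  split
  · rfl
  · next h =>
    rw [mem_range, not_lt] at h
    exact (jc_eq_zero q (by omega)).symm

theorem jtp (q : R) (N : ℕ) :
    ∏ k ∈ range N, ((1 + C (q^(2*k+1)) * X) * (X + C (q^(2*k+1)))) =
    ∑ i ∈ range (2*N+1), C (jc q N i) * X^i := by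
  induction N with
  | zero =>
    simp [jc]
    have : sqd 0 0 = 0 := by
      have := sqd_cast 0 0; omega
    simp [this, qb_zero_right]
  | succ N ih =>
    rw [prod_range_succ, ih]
    set a := q^(2*N+1) with ha
    set P := ∑ i ∈ range (2*N+1), C (jc q N i) * X^i with hP
    have hG : ∀ c : R, (1 + C c * X) * (X + C c) = C c + C (1+c^2) * X^1 + C c * X^2 := by
      intro c; rw [C_add, C_1, C_pow]; ring
    have hre : P * (C a + C (1+a^2) * X^1 + C a * X^2)
        = P * C a + (P * C (1+a^2)) * X^1 + (P * C a) * X^2 := by ring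
    rw [hG a, hre]
    have hPc : ∀ m, P.coeff m = jc q N m := by
      intro m; rw [hP]; exact coeff_jcsum q N m
    ext n
    rw [coeff_jcsum, coeff_add, coeff_add, coeff_mul_C, coeff_mul_X_pow', coeff_mul_X_pow']
    match n with
    | 0 =>
      simp only [show ¬(1 ≤ 0) by omega, show ¬(2 ≤ 0) by omega, if_neg, if_false]
      simp only [coeff_mul_C, hPc]
      rw [jc_b0]; ring
    | 1 =>
      simp only [show (1:ℕ) ≤ 1 by omega, show ¬(2 ≤ 1) by omega, if_true, if_false, if_neg, if_pos]
      simp only [coeff_mul_C, hPc, show (1:ℕ)-1 = 0 from rfl]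
      rw [jc_b1]; ring
    | (j+2) =>
      simp only [show (1:ℕ) ≤ j+2 by omega, show (2:ℕ) ≤ j+2 by omega, if_pos]
      simp only [coeff_mul_C, hPc, show ∀ j:ℕ, j+2-1 = j+1 from fun _ => rfl,
        show ∀ j:ℕ, j+2-2 = j from fun _ => rfl]
      rw [jc_rec]
      have : a^2 = q^(4*N+2) := by
        rw [ha, ← pow_mul]; congr 1; ring
      rw [this]
      ring

lemma gauss_pre (q : R) (N : ℕ) :
    ∏ k ∈ range N, (1 - q^(2*k+1))^2
      = (-1)^N * ∑ i ∈ range (2*N+1), (-1)^i * (qb (q^2) (2*N) i * q^(sqd i N)) := by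
  have h := congrArg (Polynomial.eval (-1 : R)) (jtp q N)
  rw [eval_prod, eval_finset_sum] at h
  simp only [eval_mul, eval_add, eval_one, eval_C, eval_X, eval_pow] at h
  have hL : ∀ k, (1 + q^(2*k+1) * (-1)) * (-1 + q^(2*k+1)) = -((1 - q^(2*k+1))^2) := by
    intro k; ring
  rw [Finset.prod_congr rfl (fun k _ => hL k)] at h
  have hneg : ∀ k:ℕ, -((1 - q ^ (2 * k + 1)) ^ 2) = (-1) * (1 - q^(2*k+1))^2 :=
    fun k => by ring
  rw [Finset.prod_congr rfl (fun k _ => hneg k), Finset.prod_mul_distrib,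
    Finset.prod_const, Finset.card_range] at h
  have h2 := congrArg (fun z => (-1:R)^N * z) h
  rw [← mul_assoc, ← mul_pow, neg_mul_neg, one_mul, one_pow, one_mul] at h2
  rw [h2]
  congr 1
  apply Finset.sum_congr rfl
  intro i _
  rw [jc]; ring

end JTPpart

section PSpart
open PowerSeries

lemma dvd_prod_sub_one {ι : Type*} {M : ℕ} (s : Finset ι) (f : ι → (PowerSeries ℤ))
    (h : ∀ i ∈ s, (X:(PowerSeries ℤ))^M ∣ (f i - 1)) : (X:(PowerSeries ℤ))^M ∣ (∏ i ∈ s, f i - 1) := by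
  classical
  induction s using Finset.induction with
  | empty => simp
  | insert a s' hx ih =>
    next =>
      rw [Finset.prod_insert hx]
      have h1 : (X:(PowerSeries ℤ))^M ∣ (f a - 1) := h a (Finset.mem_insert_self a s')
      have h2 : (X:(PowerSeries ℤ))^M ∣ (∏ i ∈ s', f i - 1) := ih fun i hi => h i (Finset.mem_insert_of_mem hi)
      have : f a * ∏ i ∈ s', f i - 1
          = f a * (∏ i ∈ s', f i - 1) + (f a - 1) := by ring
      rw [this]
      exact dvd_add (Dvd.dvd.mul_left h2 _) h1

lemma pr_split (t : (PowerSeries ℤ)) {a b : ℕ} (hab : a ≤ b) :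
    pr t b = pr t a * ∏ j ∈ Ioc a b, (1 - t^j) := by
  rw [pr, pr, Finset.prod_Ioc_consecutive _ (Nat.zero_le a) hab]

lemma constantCoeff_pr (N : ℕ) : constantCoeff (pr (X^2 : (PowerSeries ℤ)) N) = 1 := by
  rw [pr, map_prod]
  apply Finset.prod_eq_one
  intro j hj
  rw [Finset.mem_Ioc] at hj
  rw [map_sub, map_one, map_pow, map_pow, constantCoeff_X]
  rw [zero_pow (by norm_num : (2:ℕ) ≠ 0), zero_pow (by omega : j ≠ 0), sub_zero]

lemma pr_ne_zero (N : ℕ) : (pr (X^2 : (PowerSeries ℤ)) N) ≠ 0 := by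
  intro h
  have := constantCoeff_pr N
  rw [h, map_zero] at this
  norm_num at this

lemma tail_dvd {a b m : ℕ} (hm : m ≤ a) :
    (X:(PowerSeries ℤ))^(2*m+2) ∣ (∏ j ∈ Ioc a b, (1 - (X^2:(PowerSeries ℤ))^j) - 1) := by
  apply dvd_prod_sub_one
  intro j hj
  rw [Finset.mem_Ioc] at hj
  have : (1 - (X^2:(PowerSeries ℤ))^j) - 1 = -((X:(PowerSeries ℤ))^(2*j)) := by
    rw [← pow_mul]; ring
  rw [this, dvd_neg]
  exact pow_dvd_pow _ (by omega)

lemma W_est (N i : ℕ) (hi : i ≤ 2*N) :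
    (X:(PowerSeries ℤ))^(2*(min i (2*N-i)) + 2) ∣ (pr (X^2 : (PowerSeries ℤ)) N * qb ((X:(PowerSeries ℤ))^2) (2*N) i - 1) := by
  have hqb := qb_mul_pr (X^2 : (PowerSeries ℤ)) (2*N) i hi
  rcases le_or_gt i N with h | h
  · have h1 : pr (X^2 : (PowerSeries ℤ)) N = pr (X^2 : (PowerSeries ℤ)) i * ∏ j ∈ Ioc i N, (1 - (X^2:(PowerSeries ℤ))^j) := pr_split _ h
    have h2 : pr (X^2 : (PowerSeries ℤ)) (2*N) = pr (X^2 : (PowerSeries ℤ)) (2*N-i) * ∏ j ∈ Ioc (2*N-i) (2*N), (1 - (X^2:(PowerSeries ℤ))^j) :=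
      pr_split _ (by omega)
    have hW : pr (X^2 : (PowerSeries ℤ)) N * qb ((X:(PowerSeries ℤ))^2) (2*N) i
        = (∏ j ∈ Ioc i N, (1 - (X^2:(PowerSeries ℤ))^j)) * ∏ j ∈ Ioc (2*N-i) (2*N), (1 - (X^2:(PowerSeries ℤ))^j) := by
      have hnz : pr (X^2 : (PowerSeries ℤ)) i * pr (X^2 : (PowerSeries ℤ)) (2*N-i) ≠ 0 :=
        mul_ne_zero (pr_ne_zero i) (pr_ne_zero _)
      apply mul_right_cancel₀ hnz
      calc pr (X^2 : (PowerSeries ℤ)) N * qb ((X:(PowerSeries ℤ))^2) (2*N) i * (pr (X^2:(PowerSeries ℤ)) i * pr (X^2:(PowerSeries ℤ)) (2*N-i))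
          = pr (X^2 : (PowerSeries ℤ)) N * (qb ((X:(PowerSeries ℤ))^2) (2*N) i * pr (X^2:(PowerSeries ℤ)) i * pr (X^2:(PowerSeries ℤ)) (2*N-i)) := by
            ring
        _ = pr (X^2 : (PowerSeries ℤ)) N * pr (X^2 : (PowerSeries ℤ)) (2*N) := by rw [hqb]
        _ = _ := by rw [h1, h2]; ring
    rw [hW, min_eq_left (by omega)]
    have d1 : (X:(PowerSeries ℤ))^(2*i+2) ∣ (∏ j ∈ Ioc i N, (1 - (X^2:(PowerSeries ℤ))^j) - 1) := tail_dvd le_rfl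
    have d2 : (X:(PowerSeries ℤ))^(2*i+2) ∣ (∏ j ∈ Ioc (2*N-i) (2*N), (1 - (X^2:(PowerSeries ℤ))^j) - 1) :=
      tail_dvd (by omega)
    have : (∏ j ∈ Ioc i N, (1 - (X^2:(PowerSeries ℤ))^j)) * ∏ j ∈ Ioc (2*N-i) (2*N), (1 - (X^2:(PowerSeries ℤ))^j) - 1
        = (∏ j ∈ Ioc i N, (1 - (X^2:(PowerSeries ℤ))^j)) * (∏ j ∈ Ioc (2*N-i) (2*N), (1 - (X^2:(PowerSeries ℤ))^j) - 1)
          + (∏ j ∈ Ioc i N, (1 - (X^2:(PowerSeries ℤ))^j) - 1) := by ring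
    rw [this]
    exact dvd_add (Dvd.dvd.mul_left d2 _) d1
  · have h1 : pr (X^2 : (PowerSeries ℤ)) N = pr (X^2 : (PowerSeries ℤ)) (2*N-i) * ∏ j ∈ Ioc (2*N-i) N, (1 - (X^2:(PowerSeries ℤ))^j) :=
      pr_split _ (by omega)
    have h2 : pr (X^2 : (PowerSeries ℤ)) (2*N) = pr (X^2 : (PowerSeries ℤ)) i * ∏ j ∈ Ioc i (2*N), (1 - (X^2:(PowerSeries ℤ))^j) :=
      pr_split _ (by omega)
    have hW : pr (X^2 : (PowerSeries ℤ)) N * qb ((X:(PowerSeries ℤ))^2) (2*N) i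
        = (∏ j ∈ Ioc (2*N-i) N, (1 - (X^2:(PowerSeries ℤ))^j)) * ∏ j ∈ Ioc i (2*N), (1 - (X^2:(PowerSeries ℤ))^j) := by
      have hnz : pr (X^2 : (PowerSeries ℤ)) i * pr (X^2 : (PowerSeries ℤ)) (2*N-i) ≠ 0 :=
        mul_ne_zero (pr_ne_zero i) (pr_ne_zero _)
      apply mul_right_cancel₀ hnz
      calc pr (X^2 : (PowerSeries ℤ)) N * qb ((X:(PowerSeries ℤ))^2) (2*N) i * (pr (X^2:(PowerSeries ℤ)) i * pr (X^2:(PowerSeries ℤ)) (2*N-i))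
          = pr (X^2 : (PowerSeries ℤ)) N * (qb ((X:(PowerSeries ℤ))^2) (2*N) i * pr (X^2:(PowerSeries ℤ)) i * pr (X^2:(PowerSeries ℤ)) (2*N-i)) := by
            ring
        _ = pr (X^2 : (PowerSeries ℤ)) N * pr (X^2 : (PowerSeries ℤ)) (2*N) := by rw [hqb]
        _ = _ := by rw [h1, h2]; ring
    rw [hW, min_eq_right (by omega)]
    have d1 : (X:(PowerSeries ℤ))^(2*(2*N-i)+2) ∣ (∏ j ∈ Ioc (2*N-i) N, (1 - (X^2:(PowerSeries ℤ))^j) - 1) :=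
      tail_dvd le_rfl
    have d2 : (X:(PowerSeries ℤ))^(2*(2*N-i)+2) ∣ (∏ j ∈ Ioc i (2*N), (1 - (X^2:(PowerSeries ℤ))^j) - 1) :=
      tail_dvd (by omega)
    have : (∏ j ∈ Ioc (2*N-i) N, (1 - (X^2:(PowerSeries ℤ))^j)) * ∏ j ∈ Ioc i (2*N), (1 - (X^2:(PowerSeries ℤ))^j) - 1
        = (∏ j ∈ Ioc (2*N-i) N, (1 - (X^2:(PowerSeries ℤ))^j)) * (∏ j ∈ Ioc i (2*N), (1 - (X^2:(PowerSeries ℤ))^j) - 1)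
          + (∏ j ∈ Ioc (2*N-i) N, (1 - (X^2:(PowerSeries ℤ))^j) - 1) := by ring
    rw [this]
    exact dvd_add (Dvd.dvd.mul_left d2 _) d1

/-- truncated theta series -/
noncomputable def th (N : ℕ) : (PowerSeries ℤ) := ∑ i ∈ range (2*N+1), ((-1):(PowerSeries ℤ))^(N+i) * X^(sqd i N)

lemma key (N : ℕ) :
    (X:(PowerSeries ℤ))^(2*N+1) ∣ ((∏ k ∈ range N, (1 - (X:(PowerSeries ℤ))^(2*k+1))^2) * pr (X^2 : (PowerSeries ℤ)) N - th N) := by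
  have hg := gauss_pre (X : (PowerSeries ℤ)) N
  rw [hg, th]
  have expand : ((-1:(PowerSeries ℤ))^N * ∑ i ∈ range (2*N+1), (-1)^i * (qb ((X:(PowerSeries ℤ))^2) (2*N) i * X^(sqd i N)))
        * pr (X^2 : (PowerSeries ℤ)) N
      = ∑ i ∈ range (2*N+1),
          (-1:(PowerSeries ℤ))^(N+i) * X^(sqd i N) * (pr (X^2 : (PowerSeries ℤ)) N * qb ((X:(PowerSeries ℤ))^2) (2*N) i) := by
    rw [mul_comm, Finset.mul_sum, Finset.mul_sum]
    apply Finset.sum_congr rfl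
    intro i _
    rw [pow_add]
    ring
  rw [expand, ← Finset.sum_sub_distrib]
  apply Finset.dvd_sum
  intro i hi
  rw [Finset.mem_range] at hi
  have est := W_est N i (by omega)
  have : (-1:(PowerSeries ℤ))^(N+i) * X^(sqd i N) * (pr (X^2 : (PowerSeries ℤ)) N * qb ((X:(PowerSeries ℤ))^2) (2*N) i)
      - (-1:(PowerSeries ℤ))^(N+i) * X^(sqd i N)
      = ((-1:(PowerSeries ℤ))^(N+i) * X^(sqd i N)) * (pr (X^2 : (PowerSeries ℤ)) N * qb ((X:(PowerSeries ℤ))^2) (2*N) i - 1) := by ring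
  rw [this]
  have hexp : 2*N+1 ≤ sqd i N + (2*(min i (2*N-i)) + 2) := by
    have hc := sqd_cast i N
    rcases le_or_gt i N with h | h
    · have hmin : min i (2*N-i) = i := by omega
      rw [hmin]
      have : (sqd i N : ℤ) = ((N - i : ℕ) : ℤ)^2 := by
        rw [hc, Nat.cast_sub h]; ring
      have h2 : sqd i N = (N-i)^2 := by exact_mod_cast this
      rw [h2]
      zify [h]
      nlinarith [sq_nonneg ((N:ℤ) - i - 1)]
    · have hmin : min i (2*N-i) = 2*N-i := by omega
      rw [hmin]
      have : (sqd i N : ℤ) = ((i - N : ℕ) : ℤ)^2 := by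
        rw [hc, Nat.cast_sub (by omega)]
      have h2 : sqd i N = (i-N)^2 := by exact_mod_cast this
      rw [h2]
      have hi2 : i ≤ 2*N := by omega
      zify [hi2, (by omega : N ≤ i)]
      nlinarith [sq_nonneg ((i:ℤ) - N - 1)]
  have base : (X:(PowerSeries ℤ))^(2*N+1) ∣ X^(sqd i N) * (pr (X^2 : (PowerSeries ℤ)) N * qb ((X:(PowerSeries ℤ))^2) (2*N) i - 1) := by
    calc (X:(PowerSeries ℤ))^(2*N+1) ∣ (X:(PowerSeries ℤ))^(sqd i N + (2*(min i (2*N-i)) + 2)) := pow_dvd_pow _ hexp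
      _ = X^(sqd i N) * X^(2*(min i (2*N-i)) + 2) := pow_add _ _ _
      _ ∣ _ := mul_dvd_mul_left _ est
  have e2 : (-1:(PowerSeries ℤ))^(N+i) * X^(sqd i N) * (pr (X^2 : (PowerSeries ℤ)) N * qb ((X:(PowerSeries ℤ))^2) (2*N) i - 1)
      = (-1:(PowerSeries ℤ))^(N+i) * (X^(sqd i N) * (pr (X^2 : (PowerSeries ℤ)) N * qb ((X:(PowerSeries ℤ))^2) (2*N) i - 1)) := by ring
  rw [e2]
  exact Dvd.dvd.mul_left base _

lemma split_odd_even {M : Type*} [CommMonoid M] (f : ℕ → M) (m : ℕ) :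
    ∏ k ∈ Ioc 0 (2*m), f k = (∏ k ∈ range m, f (2*k+1)) * ∏ k ∈ Ioc 0 m, f (2*k) := by
  induction m with
  | zero => simp
  | succ m ih =>
    have h1 : 2*(m+1) = 2*m+1+1 := by ring
    rw [h1, prod_Ioc_succ_top (by omega), prod_Ioc_succ_top (by omega), ih,
      prod_range_succ, prod_Ioc_succ_top (by omega)]
    rw [show 2*m+1+1 = 2*(m+1) by ring, mul_assoc]
    exact mul_mul_mul_comm _ _ _ _

lemma gauss2 (m : ℕ) :
    (X:(PowerSeries ℤ))^(m+1) ∣ ((∏ k ∈ Ioc 0 m, (1 - (X:(PowerSeries ℤ))^k))^2 - th m * pr (X^2 : (PowerSeries ℤ)) m) := by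
  set A := ∏ k ∈ Ioc 0 m, (1 - (X:(PowerSeries ℤ))^k) with hA
  set U := ∏ k ∈ Ioc m (2*m), (1 - (X:(PowerSeries ℤ))^k) with hU
  have hA2m : ∏ k ∈ Ioc 0 (2*m), (1 - (X:(PowerSeries ℤ))^k) = A * U := by
    rw [hA, hU, Finset.prod_Ioc_consecutive _ (Nat.zero_le m) (by omega)]
  have hsplit : ∏ k ∈ Ioc 0 (2*m), (1 - (X:(PowerSeries ℤ))^k)
      = (∏ k ∈ range m, (1 - (X:(PowerSeries ℤ))^(2*k+1))) * pr (X^2 : (PowerSeries ℤ)) m := by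
    rw [split_odd_even (fun k => (1 - (X:(PowerSeries ℤ))^k)) m, pr]
    congr 1
    apply Finset.prod_congr rfl
    intro j _
    rw [← pow_mul]
  have hU1 : (X:(PowerSeries ℤ))^(m+1) ∣ (U - 1) := by
    apply dvd_prod_sub_one
    intro k hk
    rw [Finset.mem_Ioc] at hk
    have : (1 - (X:(PowerSeries ℤ))^k) - 1 = -(X:(PowerSeries ℤ))^k := by ring
    rw [this, dvd_neg]
    exact pow_dvd_pow _ (by omega)
  -- A^2 - th*pr = A^2*(1 - U^2) + ((A*U)^2 - th*pr)
  have hk2 : (X:(PowerSeries ℤ))^(m+1) ∣ ((A*U)^2 - th m * pr (X^2 : (PowerSeries ℤ)) m) := by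
    have : (A*U)^2 = (∏ k ∈ range m, (1 - (X:(PowerSeries ℤ))^(2*k+1))^2) * pr (X^2 : (PowerSeries ℤ)) m * pr (X^2 : (PowerSeries ℤ)) m := by
      rw [← hA2m, hsplit, mul_pow, ← Finset.prod_pow]
      ring
    rw [this]
    have hkey := key m
    have : (∏ k ∈ range m, (1 - (X:(PowerSeries ℤ))^(2*k+1))^2) * pr (X^2 : (PowerSeries ℤ)) m * pr (X^2 : (PowerSeries ℤ)) m
        - th m * pr (X^2 : (PowerSeries ℤ)) m
        = ((∏ k ∈ range m, (1 - (X:(PowerSeries ℤ))^(2*k+1))^2) * pr (X^2 : (PowerSeries ℤ)) m - th m) * pr (X^2 : (PowerSeries ℤ)) m := by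
      ring
    rw [this]
    exact dvd_trans (pow_dvd_pow _ (by omega)) (Dvd.dvd.mul_right hkey _)
  have hu2 : (X:(PowerSeries ℤ))^(m+1) ∣ (1 - U^2) := by
    have : 1 - U^2 = -((U - 1) * (U + 1)) := by ring
    rw [this, dvd_neg]
    exact Dvd.dvd.mul_right hU1 _
  have : A^2 - th m * pr (X^2 : (PowerSeries ℤ)) m
      = A^2 * (1 - U^2) + ((A*U)^2 - th m * pr (X^2 : (PowerSeries ℤ)) m) := by ring
  rw [this]
  exact dvd_add (Dvd.dvd.mul_left hu2 _) hk2

abbrev S := ZMod 16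
noncomputable abbrev ψ : (PowerSeries ℤ) →+* PowerSeries S := PowerSeries.map (Int.castRingHom S)

lemma coeff_th_eq_zero (n : ℕ) : (coeff (R := ℤ) (8*n+2)) (th (8*n+2)) = 0 := by
  obtain ⟨m, hm⟩ : ∃ m, m = 8*n+2 := ⟨_, rfl⟩
  rw [← hm]
  rw [th, map_sum]
  apply Finset.sum_eq_zero
  intro i _
  have h1 : ((-1:(PowerSeries ℤ)))^(m+i) * X^(sqd i m) = C ((-1:ℤ)^(m+i)) * X^(sqd i m) := by
    rw [map_pow, map_neg, map_one]
  rw [h1, coeff_C_mul, coeff_X_pow]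
  have : ¬ (m = sqd i m) := by
    intro h
    have hc := sqd_cast i m
    set z : ℤ := (i:ℤ) - m with hz
    have : ((m:ℕ):ℤ) = z^2 := by rw [h, hc]
    rcases Int.even_or_odd z with ⟨c, hc2⟩ | ⟨c, hc2⟩
    · rw [hc2] at this
      have h2 : ((m:ℕ):ℤ) = 4*(c*c) := by rw [this]; ring
      have hmz : ((m:ℕ):ℤ) = 8*(n:ℤ)+2 := by rw [hm]; push_cast; ring
      omega
    · rw [hc2] at this
      have h2 : ((m:ℕ):ℤ) = 4*(c*c) + 4*c + 1 := by rw [this]; ring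
      have hmz : ((m:ℕ):ℤ) = 8*(n:ℤ)+2 := by rw [hm]; push_cast; ring
      omega
  rw [if_neg this, mul_zero]


end PSpart

end Pbar7

open Pbar7 Finset PowerSeries in
set_option maxHeartbeats 1000000 in
theorem pbar7_8n2_mod16 (n : ℕ) :
    pbar 7 (8 * n + 2) ≡ 0 [ZMOD 16] := by
  obtain ⟨m, hm⟩ : ∃ m, m = 8*n+2 := ⟨_, rfl⟩
  rw [← hm]
  have hgoal : ((pbar 7 m : ℤ) : S) = 0 → pbar 7 m ≡ 0 [ZMOD 16] := by
    intro h
    have := (ZMod.intCast_zmod_eq_zero_iff_dvd (pbar 7 m) 16).mp h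
    exact (Int.modEq_zero_iff_dvd).mpr (by exact_mod_cast this)
  apply hgoal
  rw [pbar]
  obtain ⟨P, hP⟩ : ∃ P : (PowerSeries ℤ), P = ∏ k ∈ Finset.Icc 1 m, (1 - X ^ (2 * k)) ^ 7 := ⟨_, rfl⟩
  obtain ⟨Q, hQ⟩ : ∃ Q : (PowerSeries ℤ), Q = ∏ k ∈ Finset.Icc 1 m, (1 - X ^ k) ^ (2*7) := ⟨_, rfl⟩
  rw [← hP, ← hQ]
  -- constant coefficient of Q is 1
  have hQc : constantCoeff Q = 1 := by
    rw [hQ, map_prod]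
    apply Finset.prod_eq_one
    intro k hk
    rw [Finset.mem_Icc] at hk
    rw [map_pow, map_sub, map_one, map_pow, constantCoeff_X,
      zero_pow (by omega : k ≠ 0), sub_zero, one_pow]
  have hQinv : Q * invOfUnit Q 1 = 1 := PowerSeries.mul_invOfUnit Q 1 (by rw [hQc]; rfl)
  -- move to ZMod 16
  rw [show (((coeff (R := ℤ) m) (P * invOfUnit Q 1) : ℤ) : S)
      = (Int.castRingHom S) ((coeff (R := ℤ) m) (P * invOfUnit Q 1)) from rfl]
  rw [← PowerSeries.coeff_map (f := Int.castRingHom S), map_mul]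
  obtain ⟨v, hv⟩ : ∃ v, v = ψ (invOfUnit Q 1) := ⟨_, rfl⟩
  rw [← hv]
  obtain ⟨a, ha⟩ : ∃ a : PowerSeries S, a = ∏ k ∈ Finset.Icc 1 m, (1 - X ^ k) := ⟨_, rfl⟩
  obtain ⟨b, hb⟩ : ∃ b : PowerSeries S, b = ∏ k ∈ Finset.Icc 1 m, (1 + X ^ k) := ⟨_, rfl⟩
  obtain ⟨p2, hp2⟩ : ∃ p2 : PowerSeries S, p2 = ∏ k ∈ Finset.Icc 1 m, (1 - X ^ (2*k)) := ⟨_, rfl⟩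
  have h16 : (16 : PowerSeries S) = 0 := by
    have h1 : ((16:ℕ) : S) = 0 := by decide
    have h2 : ((16:ℕ) : PowerSeries S) = C ((16:ℕ) : S) := (map_natCast (C (R := S)) 16).symm
    have h3 : (16 : PowerSeries S) = ((16:ℕ) : PowerSeries S) := by norm_cast
    rw [h3, h2, h1, map_zero]
  have hψP : ψ P = p2 ^ 7 := by
    rw [hP, map_prod, hp2, ← Finset.prod_pow]
    apply Finset.prod_congr rfl
    intro k _
    rw [map_pow, map_sub, map_one, map_pow, PowerSeries.map_X]
  have hψQ : ψ Q = a ^ 14 := by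
    rw [hQ, map_prod, ha, ← Finset.prod_pow]
    apply Finset.prod_congr rfl
    intro k _
    rw [map_pow, map_sub, map_one, map_pow, PowerSeries.map_X]
  have hQv : a^14 * v = 1 := by
    rw [← hψQ, hv, ← map_mul, hQinv, map_one]
  have hab : a * b = p2 := by
    rw [ha, hb, hp2, ← Finset.prod_mul_distrib]
    apply Finset.prod_congr rfl
    intro k _
    have : (X : PowerSeries S)^(2*k) = (X^k)^2 := by rw [← pow_mul, mul_comm]
    rw [this]; ring
  have hb8 : b^8 = a^8 := by
    rw [ha, hb, ← Finset.prod_pow, ← Finset.prod_pow]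
    apply Finset.prod_congr rfl
    intro k _
    linear_combination (X^k + 7*(X^k)^3 + 7*(X^k)^5 + (X^k)^7 : PowerSeries S) * h16
  have halg : (ψ P * v) * p2 = a^2 := by
    rw [hψP, ← hab, mul_pow]
    have e1 : a ^ 7 * b ^ 7 * v * (a * b) = b ^ 8 * a ^ 8 * v := by ring
    rw [e1, hb8]
    have e2 : a ^ 8 * a ^ 8 * v = a ^ 2 * (a ^ 14 * v) := by ring
    rw [e2, hQv, mul_one]
  -- Gauss congruence mapped to ZMod 16
  have hg : (X : PowerSeries S)^(m+1) ∣ (a^2 - ψ (th m) * p2) := by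
    have := gauss2 m
    have hmap := map_dvd ψ this
    rw [map_pow, PowerSeries.map_X, map_sub, map_pow, map_mul, map_prod] at hmap
    have e1 : ∏ k ∈ Ioc 0 m, ψ (1 - (X:(PowerSeries ℤ))^k) = a := by
      rw [ha, ← Finset.Icc_add_one_left_eq_Ioc]
      apply Finset.prod_congr rfl
      intro k _
      rw [map_sub, map_one, map_pow, PowerSeries.map_X]
    have e2 : ψ (pr (X^2 : (PowerSeries ℤ)) m) = p2 := by
      rw [pr, map_prod, hp2, ← Finset.Icc_add_one_left_eq_Ioc]
      apply Finset.prod_congr rfl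
      intro k _
      rw [map_sub, map_one, map_pow, map_pow, PowerSeries.map_X, ← pow_mul]
    rw [e1, e2] at hmap
    exact hmap
  -- p2 is a unit
  have hp2c : constantCoeff p2 = 1 := by
    rw [hp2, map_prod]
    apply Finset.prod_eq_one
    intro k hk
    rw [Finset.mem_Icc] at hk
    rw [map_sub, map_one, map_pow, constantCoeff_X, zero_pow (by omega : 2*k ≠ 0), sub_zero]
  obtain ⟨w, hw⟩ : ∃ w, w = invOfUnit p2 1 := ⟨_, rfl⟩
  have hp2w : p2 * w = 1 := by
    rw [hw]; exact PowerSeries.mul_invOfUnit p2 1 (by rw [hp2c]; rfl)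
  have hfinal : ψ P * v - ψ (th m) = (a^2 - ψ (th m) * p2) * w := by
    calc ψ P * v - ψ (th m) = (ψ P * v - ψ (th m)) * (p2 * w) := by rw [hp2w, mul_one]
      _ = ((ψ P * v) * p2 - ψ (th m) * p2) * w := by ring
      _ = (a^2 - ψ (th m) * p2) * w := by rw [halg]
  have hdvd : (X : PowerSeries S)^(m+1) ∣ (ψ P * v - ψ (th m)) := by
    rw [hfinal]
    exact Dvd.dvd.mul_right hg _
  have hco : coeff (R := S) m (ψ P * v - ψ (th m)) = 0 :=
    (PowerSeries.X_pow_dvd_iff.mp hdvd) m (by omega)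
  rw [map_sub, sub_eq_zero] at hco
  rw [hco]
  rw [PowerSeries.coeff_map]
  have := coeff_th_eq_zero n
  rw [← hm] at this
  rw [this, map_zero]
end

section
/- For all integers n ≥ 0, the number of 7-colored overpartitions satisfies p̄_{-7}(8n+3) ≡ 0 (mod 32). -/
open PowerSeries Finset

namespace Pbar32
variable {A : Type*} [CommRing A]

/-- Gaussian binomial coefficient `[m, i]` in the variable `X^2`, as a power series. -/
noncomputable def gb2 : ℕ → ℕ → PowerSeries A
  | _, 0 => 1
  | 0, _+1 => 0
  | m+1, i+1 => gb2 m i + X ^ (2*(i+1)) * gb2 m (i+1)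

@[simp] lemma gb2_zero (m : ℕ) : (gb2 m 0 : PowerSeries A) = 1 := by cases m <;> rfl

lemma gb2_succ (m i : ℕ) :
    (gb2 (m+1) (i+1) : PowerSeries A) = gb2 m i + X ^ (2*(i+1)) * gb2 m (i+1) := rfl

lemma gb2_of_lt : ∀ m i : ℕ, m < i → (gb2 m i : PowerSeries A) = 0
  | 0, _+1, _ => rfl
  | m+1, i+1, h => by
      rw [gb2_succ, gb2_of_lt m i (by omega), gb2_of_lt m (i+1) (by omega)]
      simp

@[simp] lemma gb2_self : ∀ m : ℕ, (gb2 m m : PowerSeries A) = 1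
  | 0 => rfl
  | m+1 => by
      rw [gb2_succ, gb2_self m, gb2_of_lt m (m+1) (by omega)]
      simp

lemma gb2_one (m : ℕ) : (gb2 (m+1) 1 : PowerSeries A) = X ^ (2*m) + gb2 m 1 := by
  induction m with
  | zero => simp [gb2_succ, gb2_of_lt 0 1 (by omega)]
  | succ m ih =>
      calc (gb2 (m+2) 1 : PowerSeries A) = 1 + X ^ (2*1) * gb2 (m+1) 1 := by
            rw [gb2_succ]; simp
        _ = 1 + X ^ (2*1) * (X ^ (2*m) + gb2 m 1) := by rw [ih]
        _ = X ^ (2*(m+1)) + (1 + X ^ (2*1) * gb2 m 1) := by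
            rw [show 2*(m+1) = 2*1 + 2*m by ring, pow_add]; ring
        _ = X ^ (2*(m+1)) + gb2 (m+1) 1 := by rw [gb2_succ]; simp

/-- second Pascal rule -/
lemma gb2_pascal2 : ∀ m i : ℕ, (gb2 (m+1) (i+1) : PowerSeries A)
    = X ^ (2*(m-i)) * gb2 m i + gb2 m (i+1)
  | m, 0 => by simpa using gb2_one m
  | 0, i+1 => by
      rw [gb2_succ, gb2_of_lt 0 (i+1) (by omega), gb2_of_lt 0 (i+1+1) (by omega)]
      simp
  | m+1, j+1 => by
      conv_lhs => rw [gb2_succ (m+1) (j+1), gb2_pascal2 m j, gb2_pascal2 m (j+1)]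
      conv_rhs => rw [gb2_succ m j, gb2_succ m (j+1)]
      simp only [Nat.succ_sub_succ]
      rcases le_or_gt (j+1) m with h | h
      · have hx : (X : PowerSeries A) ^ (2*(j+1+1)) * X ^ (2*(m-(j+1)))
            = X ^ (2*(m-j)) * X ^ (2*(j+1)) := by
          rw [← pow_add, ← pow_add]; congr 1; omega
        linear_combination hx * (gb2 m (j+1) : PowerSeries A)
      · rw [gb2_of_lt m (j+1) h, gb2_of_lt m (j+1+1) (by omega)]
        ring

/-- `e n i = (i - n)^2` as a natural number. -/
def e (n i : ℕ) : ℕ := ((i : ℤ) - n).natAbs ^ 2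

lemma e_cast (n i : ℕ) : (e n i : ℤ) = ((i : ℤ) - n) ^ 2 := by
  rw [e]; push_cast; rw [sq_abs]

lemma e_succ_succ (n i : ℕ) : e (n+1) (i+1) = e n i := by
  unfold e; congr 1; push_cast; ring_nf

lemma e_B (n i : ℕ) : e (n+1) i + 2*i = e n i + (2*n+1) := by
  have : ((e (n+1) i + 2*i : ℕ) : ℤ) = ((e n i + (2*n+1) : ℕ) : ℤ) := by
    push_cast [e_cast]; ring
  exact_mod_cast this

lemma e_C (n i : ℕ) (h : i ≤ 2*n) : e (n+1) (i+2) + 2*(2*n-i) = e n i + (2*n+1) := by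
  have : ((e (n+1) (i+2) + 2*(2*n-i) : ℕ) : ℤ) = ((e n i + (2*n+1) : ℕ) : ℤ) := by
    push_cast [e_cast, Nat.cast_sub h]; ring
  exact_mod_cast this

lemma e_n_zero (n : ℕ) : e n 0 = n^2 := by
  have : ((e n 0 : ℕ) : ℤ) = ((n^2 : ℕ) : ℤ) := by push_cast [e_cast]; ring
  exact_mod_cast this

lemma e_succ_one (n : ℕ) : e (n+1) 1 = n^2 := by
  have : ((e (n+1) 1 : ℕ) : ℤ) = ((n^2 : ℕ) : ℤ) := by push_cast [e_cast]; ring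
  exact_mod_cast this

lemma e_n_one (n : ℕ) : e n 1 + (2*n+1) = n^2 + 2 := by
  have : ((e n 1 + (2*n+1) : ℕ) : ℤ) = ((n^2+2 : ℕ) : ℤ) := by push_cast [e_cast]; ring
  exact_mod_cast this

lemma e_diag (n j : ℕ) : e n (n + j) = j^2 := by
  have : ((e n (n+j) : ℕ) : ℤ) = ((j^2 : ℕ) : ℤ) := by push_cast [e_cast]; ring
  exact_mod_cast this

lemma e_sub (n j : ℕ) (h : j ≤ n) : e n (n - j) = j^2 := by
  have : ((e n (n-j) : ℕ) : ℤ) = ((j^2 : ℕ) : ℤ) := by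
    push_cast [e_cast, Nat.cast_sub h]; ring
  exact_mod_cast this


lemma gb2_dag (n i : ℕ) (h : i ≤ 2*n) :
    (gb2 (2*n+2) (i+2) : PowerSeries A)
      = (1 + X ^ (2*(2*n+1))) * gb2 (2*n) (i+1) + X ^ (2*(i+2)) * gb2 (2*n) (i+2)
        + X ^ (2*(2*n-i)) * gb2 (2*n) i := by
  rw [show 2*n+2 = (2*n+1)+1 by ring, gb2_succ (2*n+1) (i+1),
    gb2_pascal2 (2*n) i, gb2_pascal2 (2*n) (i+1)]
  rcases le_or_gt (i+1) (2*n) with h1 | h1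
  · have hx : (X : PowerSeries A) ^ (2*(i+1+1)) * X ^ (2*(2*n-(i+1)))
        = X ^ (2*(2*n+1)) := by
      rw [← pow_add]; congr 1; omega
    linear_combination hx * (gb2 (2*n) (i+1) : PowerSeries A)
  · have hi : i = 2*n := by omega
    rw [gb2_of_lt (2*n) (i+1) (by omega)]
    ring

lemma gb2_colone (n : ℕ) : (gb2 (2*n+2) 1 : PowerSeries A)
    = (1 + X ^ (2*(2*n+1))) * gb2 (2*n) 0 + X ^ (2*1) * gb2 (2*n) 1 := by
  rw [show 2*n+2 = (2*n+1)+1 by ring, gb2_succ (2*n+1) 0, gb2_pascal2 (2*n) 0]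
  rw [gb2_zero, gb2_zero]
  have hx : (X : PowerSeries A) ^ (2*1) * X ^ (2*(2*n-0)) = X ^ (2*(2*n+1)) := by
    rw [← pow_add]; congr 1; omega
  linear_combination hx

noncomputable def uu (n i : ℕ) : PowerSeries A :=
  (-1) ^ (i+n) * (X ^ (e n i) * gb2 (2*n) i)

noncomputable def vv (n i : ℕ) : PowerSeries A :=
  (-1) ^ (i+n+1) * (X ^ (e n i + (2*n+1)) * gb2 (2*n) i)

noncomputable def theta (n : ℕ) : PowerSeries A := ∑ i ∈ range (2*n+1), uu n i

lemma sq2 (k : ℕ) : ((-1 : PowerSeries A)) ^ (k+2) = (-1) ^ k := by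
  rw [pow_add]; ring

lemma uu_shift (n i : ℕ) (h : i ≤ 2*n) :
    (uu (n+1) (i+2) : PowerSeries A)
      = (1 + X ^ (2*(2*n+1))) * uu n (i+1) + vv n (i+2) + vv n i := by
  unfold uu vv
  rw [show 2*(n+1) = 2*n+2 by ring, gb2_dag n i h]
  rw [show i+2+(n+1) = (i+1+n)+2 by ring, sq2 (i+1+n)]
  rw [show i+2+n+1 = (i+1+n)+2 by ring, sq2 (i+1+n)]
  rw [show i+n+1 = i+1+n by ring]
  have hE : (X : PowerSeries A) ^ (e (n+1) (i+2)) = X ^ (e n (i+1)) := by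
    rw [show i+2 = (i+1)+1 by ring, e_succ_succ n (i+1)]
  have hB : (X : PowerSeries A) ^ (e (n+1) (i+2)) * X ^ (2*(i+2))
      = X ^ (e n (i+2) + (2*n+1)) := by rw [← pow_add, e_B n (i+2)]
  have hC : (X : PowerSeries A) ^ (e (n+1) (i+2)) * X ^ (2*(2*n-i))
      = X ^ (e n i + (2*n+1)) := by rw [← pow_add, e_C n i h]
  linear_combination ((-1 : PowerSeries A))^(i+1+n)
      * ((1 + X ^ (2*(2*n+1))) * gb2 (2*n) (i+1) * hE
          + gb2 (2*n) (i+2) * hB + gb2 (2*n) i * hC)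

lemma uu_zero' (n : ℕ) : (uu (n+1) 0 : PowerSeries A) = vv n 0 := by
  unfold uu vv
  rw [show 2*(n+1) = 2*n+2 by ring]
  rw [gb2_zero, gb2_zero, e_n_zero, e_n_zero,
    show n^2 + (2*n+1) = (n+1)^2 by ring, show 0+(n+1) = 0+n+1 by ring]

lemma uu_one' (n : ℕ) : (uu (n+1) 1 : PowerSeries A)
    = (1 + X ^ (2*(2*n+1))) * uu n 0 + vv n 1 := by
  unfold uu vv
  rw [show 2*(n+1) = 2*n+2 by ring, gb2_colone n, e_succ_one n, e_n_zero n,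
    gb2_zero, e_n_one n]
  rw [show 1+(n+1) = n+2 by ring, sq2 n, show 1+n+1 = n+2 by ring, sq2 n,
    show 0+n = n by ring]
  have hx : (X : PowerSeries A) ^ (n^2) * X ^ (2*1) = X ^ (n^2+2) := by
    rw [← pow_add]
  linear_combination ((-1 : PowerSeries A))^n * gb2 (2*n) 1 * hx

lemma theta_succ (n : ℕ) :
    (theta (n+1) : PowerSeries A) = theta n * (1 - X ^ (2*n+1)) ^ 2 := by
  have hsq : ((1 : PowerSeries A) - X ^ (2*n+1)) ^ 2
      = 1 - 2 * X ^ (2*n+1) + X ^ (2*(2*n+1)) := by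
    rw [show 2*(2*n+1) = (2*n+1)+(2*n+1) by ring, pow_add]; ring
  -- RHS into canonical form
  have hRHS : theta n * ((1 : PowerSeries A) - X ^ (2*n+1)) ^ 2
      = (1 + X ^ (2*(2*n+1))) * (∑ i ∈ range (2*n+1), uu n i)
        + 2 * ∑ i ∈ range (2*n+1), vv n i := by
    rw [hsq, theta, Finset.sum_mul, Finset.mul_sum, Finset.mul_sum, ← Finset.sum_add_distrib]
    apply Finset.sum_congr rfl
    intro i _
    unfold uu vv
    rw [show i+n+1 = (i+n)+1 by ring, pow_succ, pow_add]
    ring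
  -- LHS decomposition
  have hL1 : (theta (n+1) : PowerSeries A)
      = (∑ i ∈ range (2*n+1), uu (n+1) (i+2)) + uu (n+1) 1 + uu (n+1) 0 := by
    rw [theta, show 2*(n+1)+1 = (2*n+2)+1 by ring, Finset.sum_range_succ',
      show 2*n+2 = (2*n+1)+1 by ring, Finset.sum_range_succ']
  have hu : (∑ i ∈ range (2*n+1), uu (n+1) (i+2) : PowerSeries A)
      = (1 + X ^ (2*(2*n+1))) * (∑ i ∈ range (2*n+1), uu n (i+1))
        + (∑ i ∈ range (2*n+1), vv n (i+2)) + ∑ i ∈ range (2*n+1), vv n i := by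
    rw [Finset.mul_sum, ← Finset.sum_add_distrib, ← Finset.sum_add_distrib]
    exact Finset.sum_congr rfl fun i hi => uu_shift n i (by
      simpa using Nat.lt_succ_iff.mp (Finset.mem_range.mp hi))
  have hu1 : (∑ i ∈ range (2*n+1), uu n (i+1) : PowerSeries A) + uu n 0
      = ∑ i ∈ range (2*n+1), uu n i := by
    rw [← Finset.sum_range_succ']
    rw [Finset.sum_range_succ]
    have : (uu n (2*n+1) : PowerSeries A) = 0 := by
      unfold uu; rw [gb2_of_lt (2*n) (2*n+1) (by omega)]; ring
    rw [this, add_zero]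
  have hv2 : (∑ i ∈ range (2*n+1), vv n (i+2) : PowerSeries A) + vv n 1 + vv n 0
      = ∑ i ∈ range (2*n+1), vv n i := by
    have z1 : (vv n (2*n+1) : PowerSeries A) = 0 := by
      unfold vv; rw [gb2_of_lt (2*n) (2*n+1) (by omega)]; ring
    have z2 : (vv n (2*n+2) : PowerSeries A) = 0 := by
      unfold vv; rw [gb2_of_lt (2*n) (2*n+2) (by omega)]; ring
    have e1 : (∑ i ∈ range (2*n+2), vv n (i+1) : PowerSeries A)
        = ∑ i ∈ range (2*n+1), vv n (i+2) + vv n 1 := by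
      rw [show 2*n+2 = (2*n+1)+1 by ring, Finset.sum_range_succ']
    have e2 : (∑ i ∈ range (2*n+3), vv n i : PowerSeries A)
        = ∑ i ∈ range (2*n+2), vv n (i+1) + vv n 0 := by
      rw [show 2*n+3 = (2*n+2)+1 by ring, Finset.sum_range_succ']
    have e3 : (∑ i ∈ range (2*n+3), vv n i : PowerSeries A)
        = ∑ i ∈ range (2*n+1), vv n i := by
      rw [show 2*n+3 = ((2*n+1)+1)+1 by ring, Finset.sum_range_succ,
        Finset.sum_range_succ, z1]
      rw [show 2*n+1+1 = 2*n+2 by ring, z2]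
      ring
    linear_combination e3 - e2 - e1
  rw [hRHS, hL1, hu, uu_one' n, uu_zero' n]
  linear_combination (1 + (X : PowerSeries A) ^ (2*(2*n+1))) * hu1 + hv2

/-- the key Gauss-type product identity -/
lemma Tn : ∀ n : ℕ, (∏ k ∈ range n, (1 - X ^ (2*k+1)) ^ 2 : PowerSeries A) = theta n
  | 0 => by simp [theta, uu, e, gb2_self]
  | n+1 => by
      rw [Finset.prod_range_succ, Tn n, theta_succ n]
/-- product formula for Gaussian binomials -/
lemma gb2_prod : ∀ (j i : ℕ),
    (gb2 (i+j) i : PowerSeries A) * ∏ k ∈ range i, (1 - X ^ (2*(k+1)))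
      = ∏ k ∈ range i, (1 - X ^ (2*(j+k+1)))
  | j, 0 => by simp
  | 0, i+1 => by simp
  | j+1, i+1 => by
      have key : (gb2 ((i+1)+(j+1)) (i+1) : PowerSeries A)
          = gb2 (i+(j+1)) i + X ^ (2*(i+1)) * gb2 ((i+1)+j) (i+1) := by
        rw [show (i+1)+(j+1) = (i+(j+1))+1 by ring]
        rw [gb2_succ (i+(j+1)) i, show i+(j+1) = (i+1)+j by ring]
      rw [key, Finset.prod_range_succ, add_mul]
      have h1 : (gb2 (i+(j+1)) i : PowerSeries A) * ∏ k ∈ range i, (1 - X ^ (2*(k+1)))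
          = ∏ k ∈ range i, (1 - X ^ (2*(j+1+k+1))) := gb2_prod (j+1) i
      have h2 : (gb2 ((i+1)+j) (i+1) : PowerSeries A) * ∏ k ∈ range (i+1), (1 - X ^ (2*(k+1)))
          = ∏ k ∈ range (i+1), (1 - X ^ (2*(j+k+1))) := gb2_prod j (i+1)
      rw [Finset.prod_range_succ] at h2
      have h3 : (∏ k ∈ range (i+1), ((1:PowerSeries A) - X ^ (2*(j+k+1))))
          = (1 - X ^ (2*(j+1))) * ∏ k ∈ range i, (1 - X ^ (2*(j+1+k+1))) := by
        rw [Finset.prod_range_succ']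
        have hsh : ∀ k, j+(k+1)+1 = j+1+k+1 := fun k => by ring
        simp only [hsh, show j+0+1 = j+1 by ring]
        ring
      have h4 : (∏ k ∈ range (i+1), ((1:PowerSeries A) - X ^ (2*(j+1+k+1))))
          = (∏ k ∈ range i, ((1:PowerSeries A) - X ^ (2*(j+1+k+1)))) * (1 - X ^ (2*(j+1+i+1))) :=
        Finset.prod_range_succ _ _
      rw [h4]
      have hx : (X : PowerSeries A) ^ (2*(i+1)) * X ^ (2*(j+1))
          = X ^ (2*(j+1+i+1)) := by rw [← pow_add]; congr 1; ring
      rw [h3] at h2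
      linear_combination (1 - (X:PowerSeries A) ^ (2*(i+1))) * h1
        + (X:PowerSeries A) ^ (2*(i+1)) * h2
        + (∏ k ∈ range i, ((1:PowerSeries A) - X ^ (2*(j+1+k+1)))) * hx
  termination_by j i => (j, i)

/-- congruence modulo `X^M` -/
def MEq (M : ℕ) (f g : PowerSeries A) : Prop := ∃ h, f = g + X ^ M * h

namespace MEq

lemma refl (M : ℕ) (f : PowerSeries A) : MEq M f f := ⟨0, by ring⟩

lemma of_eq {M : ℕ} {f g : PowerSeries A} (h : f = g) : MEq M f g := ⟨0, by rw [h]; ring⟩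

lemma symm {M : ℕ} {f g : PowerSeries A} : MEq M f g → MEq M g f :=
  fun ⟨h, hh⟩ => ⟨-h, by rw [hh]; ring⟩

lemma trans {M : ℕ} {f g h : PowerSeries A} : MEq M f g → MEq M g h → MEq M f h :=
  fun ⟨a, ha⟩ ⟨b, hb⟩ => ⟨b + a, by rw [ha, hb]; ring⟩

lemma add {M : ℕ} {f g f' g' : PowerSeries A} :
    MEq M f g → MEq M f' g' → MEq M (f + f') (g + g') :=
  fun ⟨a, ha⟩ ⟨b, hb⟩ => ⟨a + b, by rw [ha, hb]; ring⟩

lemma mul {M : ℕ} {f g f' g' : PowerSeries A} :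
    MEq M f g → MEq M f' g' → MEq M (f * f') (g * g') :=
  fun ⟨a, ha⟩ ⟨b, hb⟩ => ⟨a * g' + g * b + X ^ M * (a * b), by rw [ha, hb]; ring⟩

lemma pow {M : ℕ} {f g : PowerSeries A} (h : MEq M f g) :
    ∀ t : ℕ, MEq M (f ^ t) (g ^ t)
  | 0 => MEq.refl M 1
  | t+1 => by rw [pow_succ, pow_succ]; exact MEq.mul (MEq.pow h t) h

lemma sum {M : ℕ} {ι : Type*} (s : Finset ι) (f g : ι → PowerSeries A)
    (h : ∀ i ∈ s, MEq M (f i) (g i)) : MEq M (∑ i ∈ s, f i) (∑ i ∈ s, g i) := by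
  classical
  induction s using Finset.induction with
  | empty => simpa using MEq.refl M 0
  | @insert a s' hx ih =>
      rw [Finset.sum_insert hx, Finset.sum_insert hx]
      exact MEq.add (h a (Finset.mem_insert_self a s'))
        (ih fun i hi => h i (Finset.mem_insert_of_mem hi))

lemma prod_one {M : ℕ} {ι : Type*} (s : Finset ι) (f : ι → PowerSeries A)
    (h : ∀ i ∈ s, MEq M (f i) 1) : MEq M (∏ i ∈ s, f i) 1 := by
  classical
  induction s using Finset.induction with
  | empty => simpa using MEq.refl M 1
  | @insert a s' hx ih =>
      rw [Finset.prod_insert hx]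
      have := MEq.mul (h a (Finset.mem_insert_self a s'))
        (ih fun i hi => h i (Finset.mem_insert_of_mem hi))
      simpa using this

lemma X_pow {M k : ℕ} (h : M ≤ k) : MEq M ((X : PowerSeries A) ^ k) 0 :=
  ⟨X ^ (k - M), by
    have h2 : (X : PowerSeries A) ^ M * X ^ (k-M) = X ^ k := by
      rw [← pow_add]; congr 1; omega
    rw [← h2]; ring⟩

lemma one_sub_X_pow {M k : ℕ} (h : M ≤ k) : MEq M ((1 : PowerSeries A) - X ^ k) 1 :=
  ⟨-X ^ (k - M), by
    have h2 : (X : PowerSeries A) ^ M * X ^ (k-M) = X ^ k := by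
      rw [← pow_add]; congr 1; omega
    rw [← h2]; ring⟩

lemma coeff {M : ℕ} {f g : PowerSeries A} (h : MEq M f g) {d : ℕ} (hd : d < M) :
    PowerSeries.coeff d f = PowerSeries.coeff d g := by
  obtain ⟨a, ha⟩ := h
  rw [ha, map_add]
  have : (PowerSeries.coeff d) (X ^ M * a) = 0 := by
    rw [PowerSeries.coeff_mul]
    apply Finset.sum_eq_zero
    intro p hp
    have := Finset.HasAntidiagonal.mem_antidiagonal.mp hp
    rw [PowerSeries.coeff_X_pow]
    rw [if_neg (by omega)]
    ring
  rw [this, add_zero]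

end MEq
lemma neg_one_pow_congr {a b : ℕ} (h : a % 2 = b % 2) :
    ((-1 : PowerSeries A)) ^ a = (-1) ^ b := by
  rcases Nat.even_or_odd a with ha | ha
  · have hb : Even b := by rcases ha with ⟨t, ht⟩; exact Nat.even_iff.mpr (by omega)
    rw [ha.neg_one_pow, hb.neg_one_pow]
  · have hb : Odd b := by rcases ha with ⟨t, ht⟩; exact Nat.odd_iff.mpr (by omega)
    rw [ha.neg_one_pow, hb.neg_one_pow]

noncomputable def psi (N : ℕ) : PowerSeries A :=
  ∑ j ∈ range N, (-1) ^ (j+1) * X ^ ((j+1)^2)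

lemma G_eq (N : ℕ) :
    (∑ i ∈ range (2*N+1), (-1) ^ (i+N) * X ^ (e N i) : PowerSeries A)
      = 1 + 2 * psi N := by
  rw [show 2*N+1 = N+(N+1) by ring, Finset.sum_range_add]
  have h1 : (∑ i ∈ range N, (-1) ^ (i+N) * X ^ (e N i) : PowerSeries A) = psi N := by
    rw [← Finset.sum_range_reflect]
    apply Finset.sum_congr rfl
    intro i hi
    have hiN : i < N := Finset.mem_range.mp hi
    rw [show N-1-i = N-(i+1) by omega, e_sub N (i+1) (by omega)]
    rw [neg_one_pow_congr (a := N-(i+1)+N) (b := i+1) (by omega)]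
  have h2 : (∑ i ∈ range (N+1), (-1) ^ (N+i+N) * X ^ (e N (N+i)) : PowerSeries A)
      = 1 + psi N := by
    rw [Finset.sum_range_succ']
    have h3 : ((-1 : PowerSeries A)) ^ (N+0+N) * X ^ (e N (N+0)) = 1 := by
      rw [show N+0+N = 2*N by ring, neg_one_pow_congr (a := 2*N) (b := 0) (by omega)]
      rw [show N+0 = N+0 by rfl, e_diag N 0]
      norm_num
    rw [h3]
    have h4 : ∀ i, ((-1 : PowerSeries A)) ^ (N+(i+1)+N) * X ^ (e N (N+(i+1)))
        = (-1) ^ (i+1) * X ^ ((i+1)^2) := by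
      intro i
      rw [e_diag N (i+1), neg_one_pow_congr (a := N+(i+1)+N) (b := i+1) (by omega)]
    simp only [h4]
    rw [psi]; ring
  rw [h1, h2]; ring

lemma parity_split : ∀ n : ℕ, (∏ k ∈ range (2*n), (1 - X ^ (k+1)) : PowerSeries A)
    = (∏ k ∈ range n, (1 - X ^ (2*k+1))) * ∏ k ∈ range n, (1 - X ^ (2*(k+1)))
  | 0 => by simp
  | n+1 => by
      rw [show 2*(n+1) = (2*n+1)+1 by ring, Finset.prod_range_succ, Finset.prod_range_succ,
        parity_split n, Finset.prod_range_succ, Finset.prod_range_succ]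
      rw [show 2*n+1+1 = 2*(n+1) by ring]
      ring

lemma theta_E (N : ℕ) :
    MEq (N+1) ((theta N : PowerSeries A) * ∏ k ∈ range (2*N), (1 - X ^ (2*(k+1))))
      (1 + 2 * psi N) := by
  apply MEq.trans (g := ∑ i ∈ range (2*N+1), (-1) ^ (i+N) * X ^ (e N i))
  · rw [theta, Finset.sum_mul]
    apply MEq.sum
    intro i hi
    have hi2N : i ≤ 2*N := by have := Finset.mem_range.mp hi; omega
    rcases le_or_gt (e N i) N with hle | hgt
    · -- factors are ≡ 1
      set j := ((i:ℤ)-(N:ℤ)).natAbs with hj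
      have hjsq : j^2 ≤ N := by
        have : e N i = j^2 := by rw [e, hj]
        omega
      have h2j : 2*j ≤ N+1 := by nlinarith
      have hij : N ≤ i + j ∧ i ≤ N + j := by omega
      obtain ⟨t, ht⟩ : ∃ t, t = 2*N - i := ⟨_, rfl⟩
      have hsplit : (∏ k ∈ range (2*N), ((1:PowerSeries A) - X ^ (2*(k+1))))
          = (∏ k ∈ range i, (1 - X ^ (2*(k+1)))) * ∏ k ∈ range t, (1 - X ^ (2*(i+k+1))) := by
        rw [show 2*N = i + t by omega, Finset.prod_range_add]
      have hPF := gb2_prod (A := A) t i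
      rw [show i+t = 2*N by omega] at hPF
      have heq : (uu N i : PowerSeries A) * ∏ k ∈ range (2*N), (1 - X ^ (2*(k+1)))
          = ((-1) ^ (i+N) * X ^ (e N i)) *
            ((∏ k ∈ range i, (1 - X ^ (2*(t+k+1)))) * ∏ k ∈ range t, (1 - X ^ (2*(i+k+1)))) := by
        rw [uu, hsplit, ← hPF]; ring
      rw [heq]
      have hp1 : MEq (N+1) (∏ k ∈ range i, ((1:PowerSeries A) - X ^ (2*(t+k+1)))) 1 :=
        MEq.prod_one _ _ fun k _ => MEq.one_sub_X_pow (by omega)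
      have hp2 : MEq (N+1) (∏ k ∈ range t, ((1:PowerSeries A) - X ^ (2*(i+k+1)))) 1 :=
        MEq.prod_one _ _ fun k _ => MEq.one_sub_X_pow (by omega)
      apply MEq.trans (MEq.mul (MEq.refl _ _) (MEq.mul hp1 hp2))
      exact MEq.of_eq (by ring)
    · -- both sides ≡ 0
      apply MEq.trans (g := 0)
      · have heq : (uu N i : PowerSeries A) * ∏ k ∈ range (2*N), (1 - X ^ (2*(k+1)))
            = X ^ (e N i) * ((-1) ^ (i+N) * gb2 (2*N) i * ∏ k ∈ range (2*N), (1 - X ^ (2*(k+1)))) := by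
          rw [uu]; ring
        rw [heq]
        apply MEq.trans (MEq.mul (MEq.X_pow (by omega)) (MEq.refl _ _))
        exact MEq.of_eq (by ring)
      · apply MEq.symm
        have heq : ((-1 : PowerSeries A)) ^ (i+N) * X ^ (e N i)
            = X ^ (e N i) * (-1) ^ (i+N) := by ring
        rw [heq]
        apply MEq.trans (MEq.mul (MEq.X_pow (by omega)) (MEq.refl _ _))
        exact MEq.of_eq (by ring)
  · exact MEq.of_eq (G_eq N)

/-- Gauss' identity, truncated at order `N+1`. -/
lemma gauss (N : ℕ) :
    MEq (N+1) (((∏ k ∈ range N, (1 - X ^ (k+1)):PowerSeries A)) ^ 2)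
      ((1 + 2 * psi N) * ∏ k ∈ range N, (1 - X ^ (2*(k+1)))) := by
  have step1 : MEq (N+1) (∏ k ∈ range (2*N), ((1:PowerSeries A) - X ^ (k+1)))
      (∏ k ∈ range N, (1 - X ^ (k+1))) := by
    rw [show 2*N = N+N by ring, Finset.prod_range_add]
    apply MEq.trans (MEq.mul (MEq.refl _ _)
      (MEq.prod_one _ _ fun k _ => MEq.one_sub_X_pow (by omega)))
    exact MEq.of_eq (mul_one _)
  have step2 : MEq (N+1) (∏ k ∈ range (2*N), ((1:PowerSeries A) - X ^ (2*(k+1))))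
      (∏ k ∈ range N, (1 - X ^ (2*(k+1)))) := by
    rw [show 2*N = N+N by ring, Finset.prod_range_add]
    apply MEq.trans (MEq.mul (MEq.refl _ _)
      (MEq.prod_one _ _ fun k _ => MEq.one_sub_X_pow (by omega)))
    exact MEq.of_eq (mul_one _)
  apply MEq.trans (MEq.pow (MEq.symm step1) 2)
  rw [parity_split N]
  have hkey : ((∏ k ∈ range N, ((1:PowerSeries A) - X ^ (2*k+1))) *
        ∏ k ∈ range N, (1 - X ^ (2*(k+1)))) ^ 2
      = (theta N * ∏ k ∈ range N, (1 - X ^ (2*(k+1)))) * ∏ k ∈ range N, (1 - X ^ (2*(k+1))) := by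
    rw [← Tn N, Finset.prod_pow]; ring
  rw [hkey]
  apply MEq.trans (MEq.mul (MEq.mul (MEq.refl _ _) (MEq.symm step2)) (MEq.refl _ _))
  exact MEq.mul (theta_E N) (MEq.refl _ _)
lemma sq_mod8 (j : ℕ) : j^2 % 8 = 0 ∨ j^2 % 8 = 1 ∨ j^2 % 8 = 4 := by
  have h : j % 8 < 8 := Nat.mod_lt _ (by norm_num)
  rw [Nat.pow_mod]
  generalize j % 8 = r at h ⊢
  interval_cases r <;> norm_num

lemma sq_mod4 (j : ℕ) : j^2 % 4 = 0 ∨ j^2 % 4 = 1 := by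
  have h : j % 4 < 4 := Nat.mod_lt _ (by norm_num)
  rw [Nat.pow_mod]
  generalize j % 4 = r at h ⊢
  interval_cases r <;> norm_num

lemma coeff_psi_mod4 (N m : ℕ) (hm : m % 4 = 2 ∨ m % 4 = 3) :
    (PowerSeries.coeff m) (psi (A := A) N) = 0 := by
  rw [psi, map_sum]
  apply Finset.sum_eq_zero
  intro j _
  have hne : ¬ (m = (j+1)^2) := by
    intro hEq
    have := sq_mod4 (j+1)
    omega
  have hC : ((-1 : PowerSeries A)) ^ (j+1) = C ((-1)^(j+1)) := by
    rw [map_pow, map_neg, map_one]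
  rw [hC, PowerSeries.coeff_C_mul, PowerSeries.coeff_X_pow, if_neg hne, mul_zero]

lemma coeff_psi_mod8 (N m : ℕ) (hm : m % 8 = 3) :
    (PowerSeries.coeff m) (psi (A := A) N) = 0 := by
  rw [psi, map_sum]
  apply Finset.sum_eq_zero
  intro j _
  have hne : ¬ (m = (j+1)^2) := by
    intro hEq
    have := sq_mod8 (j+1)
    omega
  have hC : ((-1 : PowerSeries A)) ^ (j+1) = C ((-1)^(j+1)) := by
    rw [map_pow, map_neg, map_one]
  rw [hC, PowerSeries.coeff_C_mul, PowerSeries.coeff_X_pow, if_neg hne, mul_zero]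

lemma prod_Icc_to_range (f : ℕ → PowerSeries A) (N : ℕ) :
    ∏ k ∈ Finset.Icc 1 N, f k = ∏ k ∈ range N, f (k+1) := by
  rw [← Finset.Ico_add_one_right_eq_Icc, Finset.prod_Ico_eq_prod_range]
  simp [add_comm]

end Pbar32


open Pbar32 Finset PowerSeries

theorem pbar7_8n3_mod32 (n : ℕ) :
    pbar 7 (8 * n + 3) ≡ 0 [ZMOD 32] := by
  set N := 8 * n + 3 with hN
  have hN8 : N % 8 = 3 := by omega
  -- the key computation over `ZMod 32`
  have main : ((pbar 7 N : ℤ) : ZMod 32) = 0 := by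
    set ι : ℤ →+* ZMod 32 := Int.castRingHom (ZMod 32) with hι
    set Q : PowerSeries (ZMod 32) := ∏ k ∈ range N, (1 - X ^ (k+1)) with hQ
    set E : PowerSeries (ZMod 32) := ∏ k ∈ range N, (1 - X ^ (2*(k+1))) with hE
    set ψ : PowerSeries (ZMod 32) := psi N with hψ
    set B : PowerSeries ℤ := ∏ k ∈ Finset.Icc 1 N, (1 - PowerSeries.X ^ k) ^ (2*7) with hB
    set J : PowerSeries (ZMod 32) := PowerSeries.map ι (PowerSeries.invOfUnit B 1) with hJ
    have hpb : ((pbar 7 N : ℤ) : ZMod 32)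
        = PowerSeries.coeff N
            ((PowerSeries.map ι (∏ k ∈ Finset.Icc 1 N, (1 - PowerSeries.X ^ (2*k)) ^ 7)) * J) := by
      rw [pbar, hJ, ← map_mul, PowerSeries.coeff_map]
      rfl
    -- identify the mapped products
    have hAeq : PowerSeries.map ι (∏ k ∈ Finset.Icc 1 N, (1 - PowerSeries.X ^ (2*k)) ^ 7)
        = E ^ 7 := by
      rw [map_prod]
      have h1 : ∀ k ∈ Finset.Icc 1 N, PowerSeries.map ι ((1 - PowerSeries.X ^ (2*k)) ^ 7)
          = (1 - (X : PowerSeries (ZMod 32)) ^ (2*k)) ^ 7 := by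
        intro k _
        simp [map_pow, map_sub, PowerSeries.map_X]
      rw [Finset.prod_congr rfl h1, prod_Icc_to_range (fun k => (1 - X ^ (2*k)) ^ 7) N,
        Finset.prod_pow]
    have hBeq : PowerSeries.map ι B = Q ^ (2*7) := by
      rw [hB, map_prod]
      have h1 : ∀ k ∈ Finset.Icc 1 N, PowerSeries.map ι ((1 - PowerSeries.X ^ k) ^ (2*7))
          = (1 - (X : PowerSeries (ZMod 32)) ^ k) ^ (2*7) := by
        intro k _
        simp [map_pow, map_sub, PowerSeries.map_X]
      rw [Finset.prod_congr rfl h1, prod_Icc_to_range (fun k => (1 - X ^ k) ^ (2*7)) N,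
        Finset.prod_pow]
    -- the inverse property
    have hconst : PowerSeries.constantCoeff B = 1 := by
      rw [hB, map_prod]
      apply Finset.prod_eq_one
      intro k hk
      have hk1 : 1 ≤ k := (Finset.mem_Icc.mp hk).1
      rw [map_pow, map_sub, map_one, map_pow, PowerSeries.constantCoeff_X,
        zero_pow (by omega), sub_zero, one_pow]
    have hBJ : Q ^ (2*7) * J = 1 := by
      rw [← hBeq, hJ, ← map_mul, PowerSeries.mul_invOfUnit B 1 (by rw [hconst]; rfl), map_one]
    -- Gauss identity and mod-32 algebra
    have hG : MEq (N+1) (Q ^ 2) ((1 + 2 * ψ) * E) := gauss N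
    have hQ14 : MEq (N+1) (Q ^ (2*7)) ((1 + 2 * ψ) ^ 7 * E ^ 7) := by
      apply MEq.trans (MEq.of_eq (pow_mul Q 2 7))
      apply MEq.trans (MEq.pow hG 7)
      exact MEq.of_eq (mul_pow _ _ _)
    have h32 : (32 : PowerSeries (ZMod 32)) = 0 := by
      have h0 : (32 : ZMod 32) = 0 := by decide
      rw [← map_ofNat (PowerSeries.C) 32, h0, map_zero]
    set w : PowerSeries (ZMod 32) := 1 + 18 * ψ + 16 * ψ^2 with hw
    have hunit : (1 + 2 * ψ) ^ 7 * w = 1 := by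
      rw [hw]
      linear_combination (ψ + 11*ψ^2 + 63*ψ^3 + 217*ψ^4 + 476*ψ^5 + 672*ψ^6
        + 592*ψ^7 + 296*ψ^8 + 64*ψ^9) * h32
    have hE7 : MEq (N+1) (E ^ 7) (w * Q ^ (2*7)) := by
      apply MEq.trans (MEq.of_eq (show E^7 = w * ((1 + 2*ψ)^7 * E^7) by
        linear_combination (-(E^7)) * hunit))
      exact MEq.mul (MEq.refl _ _) (MEq.symm hQ14)
    have hfin : MEq (N+1) (E ^ 7 * J) w := by
      apply MEq.trans (MEq.mul hE7 (MEq.refl _ J))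
      apply MEq.of_eq
      rw [mul_assoc, hBJ, mul_one]
    -- extract the coefficient
    rw [hpb, hAeq, MEq.coeff hfin (by omega)]
    have hc1 : PowerSeries.coeff N (1 : PowerSeries (ZMod 32)) = 0 := by
      rw [PowerSeries.coeff_one, if_neg (by omega)]
    have hcψ : PowerSeries.coeff N ψ = 0 := coeff_psi_mod8 N N hN8
    have hcψ2 : PowerSeries.coeff N (ψ * ψ) = 0 := by
      rw [PowerSeries.coeff_mul]
      apply Finset.sum_eq_zero
      intro p hp
      have hsum : p.1 + p.2 = N := Finset.HasAntidiagonal.mem_antidiagonal.mp hp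
      rcases (show p.1 % 4 = 2 ∨ p.1 % 4 = 3 ∨ p.2 % 4 = 2 ∨ p.2 % 4 = 3 by omega) with
        h | h | h | h
      · rw [coeff_psi_mod4 N p.1 (Or.inl h), zero_mul]
      · rw [coeff_psi_mod4 N p.1 (Or.inr h), zero_mul]
      · rw [coeff_psi_mod4 N p.2 (Or.inl h), mul_zero]
      · rw [coeff_psi_mod4 N p.2 (Or.inr h), mul_zero]
    have h18 : (18 : PowerSeries (ZMod 32)) = PowerSeries.C 18 := by
      rw [map_ofNat]
    have h16 : (16 : PowerSeries (ZMod 32)) = PowerSeries.C 16 := by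
      rw [map_ofNat]
    rw [hw, map_add, map_add, hc1, h18, h16, sq, PowerSeries.coeff_C_mul,
      PowerSeries.coeff_C_mul, hcψ, hcψ2, mul_zero, mul_zero, add_zero, add_zero]
  have hdvd : (32 : ℤ) ∣ pbar 7 N := (ZMod.intCast_zmod_eq_zero_iff_dvd _ 32).mp main
  exact (Int.modEq_iff_dvd.mpr (by simpa using hdvd)).symm
end

section
/- For all integers n ≥ 0, the number of 13-colored overpartitions satisfies p̄_{-13}(8n+1) ≡ 0 (mod 2) and p̄_{-13}(8n+4) ≡ 0 (mod 2). -/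
open PowerSeries in
lemma pbar13_even (m : ℕ) (hm : m ≠ 0) : pbar 13 m ≡ 0 [ZMOD 2] := by
  set φ : ℤ →+* ZMod 2 := Int.castRingHom (ZMod 2)
  set F : PowerSeries ℤ := ∏ k ∈ Finset.Icc 1 m, (1 - X ^ (2 * k)) ^ 13 with hF
  set G : PowerSeries ℤ := ∏ k ∈ Finset.Icc 1 m, (1 - X ^ k) ^ (2 * 13) with hG
  have h2 : (2 : PowerSeries (ZMod 2)) = 0 := by
    rw [← map_ofNat (PowerSeries.C (R := ZMod 2)) 2, show (2 : ZMod 2) = 0 from rfl, map_zero]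
  have hsq : ∀ j : ℕ, ((1 : PowerSeries (ZMod 2)) - X ^ j) ^ 2 = 1 - X ^ (2 * j) := by
    intro j
    have hx : (X : PowerSeries (ZMod 2)) ^ (2 * j) = (X ^ j) ^ 2 := by
      rw [← pow_mul, mul_comm]
    rw [hx]
    linear_combination (((X : PowerSeries (ZMod 2)) ^ j) ^ 2 - X ^ j) * h2
  have hmapFG : PowerSeries.map φ F = PowerSeries.map φ G := by
    rw [hF, hG, map_prod, map_prod]
    refine Finset.prod_congr rfl fun k _ => ?_
    have : (PowerSeries.map φ) ((1 - X ^ (2 * k)) ^ 13) = (1 - X ^ (2 * k)) ^ 13 := by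
      simp
    rw [this]
    have : (PowerSeries.map φ) ((1 - X ^ k) ^ (2 * 13)) = (1 - X ^ k) ^ (2 * 13) := by
      simp
    have hp : ((1 : PowerSeries (ZMod 2)) - X ^ k) ^ (2 * 13) = (((1 : PowerSeries (ZMod 2)) - X ^ k) ^ 2) ^ 13 := by
      rw [← pow_mul]
    rw [this, hp, hsq]
  have hG0 : PowerSeries.constantCoeff (R := ℤ) G = (1 : ℤˣ) := by
    rw [hG, map_prod]
    refine Finset.prod_eq_one fun k hk => ?_
    have hk1 : k ≠ 0 := by
      simp only [Finset.mem_Icc] at hk; omega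
    simp [zero_pow hk1]
  have hGinv : G * invOfUnit G 1 = 1 := PowerSeries.mul_invOfUnit G 1 hG0
  have key : ((pbar 13 m : ℤ) : ZMod 2) = 0 := by
    have : ((pbar 13 m : ℤ) : ZMod 2)
        = PowerSeries.coeff (R := ZMod 2) m (PowerSeries.map φ (F * invOfUnit G 1)) := by
      rw [PowerSeries.coeff_map]
      rfl
    rw [this, map_mul, hmapFG, ← map_mul, hGinv, map_one]
    simp [PowerSeries.coeff_one, hm]
  have : (2 : ℤ) ∣ pbar 13 m := by
    exact_mod_cast (ZMod.intCast_zmod_eq_zero_iff_dvd _ 2).mp key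
  exact (Int.modEq_zero_iff_dvd).mpr this

theorem pbar13_8n1_8n4_mod2 (n : ℕ) :
    pbar 13 (8 * n + 1) ≡ 0 [ZMOD 2] ∧ pbar 13 (8 * n + 4) ≡ 0 [ZMOD 2] := by
  exact ⟨pbar13_even _ (by omega), pbar13_even _ (by omega)⟩
end

section
/- For all integers n ≥ 0, the number of 13-colored overpartitions satisfies p̄_{-13}(8n+2) ≡ 0 (mod 4). -/
/-- The geometric series `∑_{k ∣ j} q^j = 1/(1-q^k)` over `ZMod 4`. -/
private noncomputable def geo (k : ℕ) : PowerSeries (ZMod 4) :=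
  PowerSeries.mk fun j => if k ∣ j then 1 else 0

private lemma geo_coeff (k j : ℕ) :
    PowerSeries.coeff (R := ZMod 4) j (geo k) = if k ∣ j then 1 else 0 :=
  PowerSeries.coeff_mk _ _

private lemma geo_mul (k : ℕ) (hk : k ≠ 0) : geo k * (1 - PowerSeries.X ^ k) = 1 := by
  ext j
  rw [mul_sub, mul_one, map_sub, PowerSeries.coeff_mul_X_pow', PowerSeries.coeff_one, geo,
    PowerSeries.coeff_mk]
  rcases eq_or_ne j 0 with rfl | hj
  · simp [hk, Nat.pos_of_ne_zero hk, Nat.not_le.mpr (Nat.pos_of_ne_zero hk)]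
  · simp only [if_neg hj]
    by_cases hd : k ∣ j
    · have hkj : k ≤ j := Nat.le_of_dvd (Nat.pos_of_ne_zero hj) hd
      have : k ∣ j - k := Nat.dvd_sub hd dvd_rfl
      rw [if_pos hd, if_pos hkj, PowerSeries.coeff_mk, if_pos this, sub_self]
    · rw [if_neg hd]
      split_ifs with hkj
      · rw [PowerSeries.coeff_mk, if_neg, zero_sub, neg_zero]
        intro h
        have := Nat.dvd_add h (dvd_refl k)
        rw [Nat.sub_add_cancel hkj] at this
        exact hd this
      · simp

private lemma four_eq_zero : (4 : PowerSeries (ZMod 4)) = 0 := by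
  rw [← map_ofNat (PowerSeries.C (R := ZMod 4)) 4, show (4 : ZMod 4) = 0 by decide, map_zero]

private lemma factor_eq (k : ℕ) (hk : k ≠ 0) :
    (1 - PowerSeries.X ^ (2 * k) : PowerSeries (ZMod 4)) ^ 13
      = (1 + 2 * (PowerSeries.X ^ k * geo k)) * (1 - PowerSeries.X ^ k) ^ 26 := by
  have hg := geo_mul k hk
  have h4 := four_eq_zero
  set y : PowerSeries (ZMod 4) := PowerSeries.X ^ k with hy
  have hxx : (PowerSeries.X : PowerSeries (ZMod 4)) ^ (2 * k) = y * y := by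
    rw [two_mul, pow_add]
  have hsq : (1 - y) ^ 2 = (1 + y) ^ 2 := by linear_combination (-y) * h4
  have e1 : (1 - y * y) ^ 13 = (1 - y) ^ 13 * (1 + y) * ((1 + y) ^ 2) ^ 6 := by ring
  rw [hxx, e1, ← hsq]
  linear_combination (-(2 * y * (1 - y) ^ 25)) * hg

private lemma prod_one_add_two {s : Finset ℕ} (f : ℕ → PowerSeries (ZMod 4)) :
    ∏ k ∈ s, (1 + 2 * f k) = 1 + 2 * ∑ k ∈ s, f k := by
  classical
  induction s using Finset.induction_on with
  | empty => simp
  | insert a s h ih =>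
    rw [Finset.prod_insert h, Finset.sum_insert h, ih]
    linear_combination (f _ * ∑ k ∈ _, f k) * four_eq_zero

theorem pbar13_8n2_mod4 (n : ℕ) :
    pbar 13 (8 * n + 2) ≡ 0 [ZMOD 4] := by
  set N := 8 * n + 2 with hN
  -- reduce to a statement in ZMod 4
  have key : ((pbar 13 N : ℤ) : ZMod 4) = 0 := by
    unfold pbar
    set f : ℤ →+* ZMod 4 := Int.castRingHom (ZMod 4)
    set A : PowerSeries ℤ := ∏ k ∈ Finset.Icc 1 N, (1 - PowerSeries.X ^ (2 * k)) ^ 13 with hA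
    set B : PowerSeries ℤ := ∏ k ∈ Finset.Icc 1 N, (1 - PowerSeries.X ^ k) ^ (2 * 13) with hB
    rw [show (((PowerSeries.coeff (R := ℤ) N) (A * B.invOfUnit 1) : ℤ) : ZMod 4)
        = f ((PowerSeries.coeff (R := ℤ) N) (A * B.invOfUnit 1)) from rfl,
      ← PowerSeries.coeff_map, map_mul]
    set A' : PowerSeries (ZMod 4) :=
      ∏ k ∈ Finset.Icc 1 N, (1 - PowerSeries.X ^ (2 * k)) ^ 13 with hA'
    set B' : PowerSeries (ZMod 4) :=
      ∏ k ∈ Finset.Icc 1 N, (1 - PowerSeries.X ^ k) ^ 26 with hB'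
    set V : PowerSeries (ZMod 4) := PowerSeries.map f (PowerSeries.invOfUnit B 1) with hV
    have hmapA : PowerSeries.map f A = A' := by
      simp [hA, hA', map_prod, map_pow, map_sub, map_one, PowerSeries.map_X]
    have hmapB : PowerSeries.map f B = B' := by
      simp [hB, hB', map_prod, map_pow, map_sub, map_one, PowerSeries.map_X]
    have hconst : PowerSeries.constantCoeff (R := ℤ) B = ((1 : ℤˣ) : ℤ) := by
      rw [hB, map_prod, Finset.prod_eq_one]
      · simp
      intro k hk
      have hk1 : k ≠ 0 := by have := (Finset.mem_Icc.mp hk).1; omega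
      simp [zero_pow hk1]
    have hBV : B' * V = 1 := by
      have h1 : B * PowerSeries.invOfUnit B 1 = 1 := PowerSeries.mul_invOfUnit B 1 hconst
      have h2 := congrArg (PowerSeries.map f) h1
      rw [map_mul, map_one, hmapB] at h2
      exact h2
    rw [hmapA]
    -- the key identity mod 4
    have hid : A' = (1 + 2 * ∑ k ∈ Finset.Icc 1 N, PowerSeries.X ^ k * geo k) * B' := by
      rw [← prod_one_add_two, hA', hB', ← Finset.prod_mul_distrib]
      refine Finset.prod_congr rfl fun k hk => ?_
      have hk1 : k ≠ 0 := by have := (Finset.mem_Icc.mp hk).1; omega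
      exact factor_eq k hk1
    rw [hid, mul_assoc, hBV, mul_one]
    -- compute the coefficient: it is twice the number of divisors of N
    have hN0 : N ≠ 0 := by omega
    rw [map_add, PowerSeries.coeff_one, if_neg hN0, zero_add,
      show (2 : PowerSeries (ZMod 4)) = PowerSeries.C (R := ZMod 4) 2 from (map_ofNat _ 2).symm,
      PowerSeries.coeff_C_mul, map_sum]
    have hsum : ∀ k ∈ Finset.Icc 1 N,
        PowerSeries.coeff (R := ZMod 4) N (PowerSeries.X ^ k * geo k)
          = if k ∣ N then 1 else 0 := by
      intro k hk
      obtain ⟨hk1, hk2⟩ := Finset.mem_Icc.mp hk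
      rw [PowerSeries.coeff_X_pow_mul', if_pos hk2, geo_coeff]
      have he : (k ∣ N - k) = (k ∣ N) := by
        refine propext ⟨fun h => ?_, fun h => Nat.dvd_sub h dvd_rfl⟩
        have := Nat.dvd_add h (dvd_refl k)
        rwa [Nat.sub_add_cancel hk2] at this
      simp only [he]
    rw [Finset.sum_congr rfl hsum, Finset.sum_boole]
    have hdiv : Finset.filter (fun k => k ∣ N) (Finset.Icc 1 N) = N.divisors := by
      rw [Nat.divisors, Finset.Ico_add_one_right_eq_Icc]
    -- N = 2 * (4n+1) has an even number of divisors
    have hco : Nat.Coprime 2 (4 * n + 1) := Nat.coprime_two_left.mpr ⟨2 * n, by omega⟩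
    have hcard : N.divisors.card = 2 * (4 * n + 1).divisors.card := by
      rw [show N = 2 * (4 * n + 1) by omega, hco.card_divisors_mul,
        show Nat.divisors 2 = {1, 2} by decide]
      rfl
    rw [hdiv, hcard]
    push_cast
    ring_nf
    rw [show (4 : ZMod 4) = 0 by decide, mul_zero]
  have h4 : (4 : ℤ) ∣ pbar 13 N := by
    exact_mod_cast (ZMod.intCast_zmod_eq_zero_iff_dvd (pbar 13 N) 4).mp key
  exact (Int.modEq_zero_iff_dvd).mpr h4
end
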